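/- arXiv:1211.1319 — 11 statements merged into one kernel-verified Lean document; each statement's English description precedes it below -/
import Mathlib

section
/- Let 𝕊 be a system over a finite set X and let {X', X''} be a partition of X (X' ∪ X'' = X, X' ∩ X'' = ∅). Then exactly one of the following two statements is true: (i) 𝕊 shatters X'; (ii) ¬𝕊 strongly shatters X''. -/
/-- `𝕊` shatters `Y ⊆ X`: for every `f ∈ {0,1}^Y` there is `g ∈ {0,1}^{X−Y}` with `g⋆f ∈ S`;
equivalently, every `f : α → Bool` agrees on `Y` with some member of `S`. -/
def Shatters {α : Type*} (S : Set (α → Bool)) (Y : Set α) : Prop :=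
  ∀ f : α → Bool, ∃ h ∈ S, Set.EqOn h f Y

/-- `𝕊` strongly shatters `Y ⊆ X`: there is `g ∈ {0,1}^{X−Y}` such that for every
`f ∈ {0,1}^Y`, `g⋆f ∈ S` (here `g⋆f` is expressed as the member `h` of `S` agreeing
with `f` on `Y` and with `g` on `Yᶜ`). -/
def StronglyShatters {α : Type*} (S : Set (α → Bool)) (Y : Set α) : Prop :=
  ∃ g : α → Bool, ∀ f : α → Bool, ∃ h ∈ S, Set.EqOn h f Y ∧ Set.EqOn h g Yᶜ

/-- The family of sets shattered by the system. -/
def str {α : Type*} (S : Set (α → Bool)) : Set (Set α) :=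
  {Y | Shatters S Y}

/-- The family of sets strongly shattered by the system. -/
def sstr {α : Type*} (S : Set (α → Bool)) : Set (Set α) :=
  {Y | StronglyShatters S Y}


/-- if `{X', X''}` partitions the ground set, then exactly one of
"`𝕊` shatters `X'`" and "`¬𝕊` strongly shatters `X''`" holds. -/
theorem shatters_xor_compl_stronglyShatters {α : Type*} [Fintype α]
    (S : Set (α → Bool)) (X' X'' : Set α)
    (hunion : X' ∪ X'' = Set.univ) (hdisj : X' ∩ X'' = ∅) :
    Xor' (Shatters S X') (StronglyShatters Sᶜ X'') := by
  classical
  have hcc : X'' = X'ᶜ := by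
    ext x
    constructor
    · intro hx hx'
      have : x ∈ X' ∩ X'' := ⟨hx', hx⟩
      simp [hdisj] at this
    · intro hx
      have : x ∈ X' ∪ X'' := by rw [hunion]; trivial
      rcases this with h | h
      · exact absurd h hx
      · exact h
  subst hcc
  have key : Shatters S X' ↔ ¬ StronglyShatters Sᶜ X'ᶜ := by
    constructor
    · rintro hsh ⟨g, hg⟩
      obtain ⟨h, hhS, hhg⟩ := hsh g
      obtain ⟨h', hh'S, hh'f, hh'g⟩ := hg h
      have : h' = h := by
        funext x
        by_cases hx : x ∈ X'
        · rw [hh'g (by simpa using hx), hhg hx]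
        · exact hh'f hx
      rw [this] at hh'S
      exact hh'S hhS
    · intro hns f0
      unfold StronglyShatters at hns
      push_neg at hns
      obtain ⟨f, hf⟩ := hns f0
      set h : α → Bool := fun x => if x ∈ X' then f0 x else f x with hh
      have h1 : Set.EqOn h f X'ᶜ := fun x hx => by
        have : x ∉ X' := hx
        simp [hh, this]
      have h2 : Set.EqOn h f0 X'ᶜᶜ := fun x hx => by
        have : x ∈ X' := by simpa using hx
        simp [hh, this]
      have hhS : h ∈ S := by
        by_contra hc
        exact hf h hc h1 h2
      exact ⟨h, hhS, fun x hx => h2 (by simpa using hx)⟩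
  rcases Classical.em (Shatters S X') with hs | hs
  · exact Or.inl ⟨hs, key.mp hs⟩
  · exact Or.inr ⟨by_contra fun hns => hs (key.mpr hns), hs⟩
end

section
/- Let 𝕊 be a system over a finite set X. Then str(¬𝕊) = sstr(𝕊)* and sstr(¬𝕊) = str(𝕊)*, where F* denotes the co-complement of a family F of subsets of X. -/
/-- The co-complement of a family `F` of subsets of `X`: `F* = {Y ⊆ X : X − Y ∉ F}`. -/
def coCompl {α : Type*} (F : Set (Set α)) : Set (Set α) :=
  {Y | Yᶜ ∉ F}

open Classical in
/-- Combine `f` on `Y` with `g` off `Y`. -/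
noncomputable def comb {α : Type*} (Y : Set α) (f g : α → Bool) : α → Bool :=
  fun a => if a ∈ Y then f a else g a

lemma comb_eqOn₁ {α : Type*} (Y : Set α) (f g : α → Bool) :
    Set.EqOn (comb Y f g) f Y := fun a ha => by simp [comb, if_pos ha]

lemma comb_eqOn₂ {α : Type*} (Y : Set α) (f g : α → Bool) :
    Set.EqOn (comb Y f g) g Yᶜ := fun a ha => by simp [comb, if_neg ha]

/-- `str(¬𝕊) = sstr(𝕊)*` and `sstr(¬𝕊) = str(𝕊)*`. -/
theorem str_sstr_compl {α : Type*} [Fintype α] (S : Set (α → Bool)) :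
    str Sᶜ = coCompl (sstr S) ∧ sstr Sᶜ = coCompl (str S) := by
  constructor
  · ext Y
    simp only [str, sstr, coCompl, Set.mem_setOf_eq]
    constructor
    · rintro hsh ⟨g, hg⟩
      obtain ⟨h, hhS, hhg⟩ := hsh g
      obtain ⟨h', hh'S, hh'1, hh'2⟩ := hg h
      rw [compl_compl] at hh'2
      have : h' = h := funext fun a => by
        by_cases ha : a ∈ Y
        · exact (hh'2 ha).trans (hhg ha).symm
        · exact hh'1 ha
      exact hhS (this ▸ hh'S)
    · intro hns f
      simp only [StronglyShatters] at hns
      push_neg at hns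
      obtain ⟨f₀, hf₀⟩ := hns f
      refine ⟨comb Yᶜ f₀ f, ?_, ?_⟩
      · intro hmem
        exact hf₀ _ hmem (comb_eqOn₁ _ _ _)
          (by simpa [compl_compl] using comb_eqOn₂ Yᶜ f₀ f)
      · simpa [compl_compl] using comb_eqOn₂ Yᶜ f₀ f
  · ext Y
    simp only [str, sstr, coCompl, Set.mem_setOf_eq]
    constructor
    · rintro ⟨g, hg⟩ hsh
      obtain ⟨h, hhS, hhg⟩ := hsh g
      obtain ⟨h', hh'S, hh'1, hh'2⟩ := hg h
      have : h' = h := funext fun a => by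
        by_cases ha : a ∈ Y
        · exact hh'1 ha
        · exact (hh'2 ha).trans (hhg ha).symm
      exact hh'S (this ▸ hhS)
    · intro hns
      simp only [Shatters] at hns
      push_neg at hns
      obtain ⟨f, hf⟩ := hns
      refine ⟨f, fun f' => ⟨comb Yᶜ f f', ?_, ?_, comb_eqOn₁ _ _ _⟩⟩
      · intro hmem
        exact hf _ hmem (comb_eqOn₁ _ _ _)
      · simpa [compl_compl] using comb_eqOn₂ Yᶜ f f'
end

section
/- (Sandwich Theorem) For every system 𝕊 over a finite set X: |sstr(𝕊)| ≤ |𝕊| ≤ |str(𝕊)|. -/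
section aux
variable {α : Type*} [Fintype α] [DecidableEq α]

lemma sandwich_key (E : Finset α) :
    ∀ S : Set (α → Bool), (∀ f ∈ S, ∀ a, a ∉ E → f a = false) →
      ({Y | Y ⊆ ↑E ∧ StronglyShatters S Y}).ncard ≤ S.ncard ∧
        S.ncard ≤ ({Y | Y ⊆ ↑E ∧ Shatters S Y}).ncard := by
  induction E using Finset.induction with
  | empty =>
    intro S hsupp
    have hsub : S ⊆ {fun _ => false} := by
      intro f hf
      have : f = fun _ => false := funext fun a => hsupp f hf a (by simp)
      simp [this]
    rcases S.eq_empty_or_nonempty with rfl | ⟨c, hc⟩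
    · constructor
      · apply Nat.le_of_eq
        have he : {Y | Y ⊆ (↑(∅ : Finset α) : Set α) ∧
            StronglyShatters (∅ : Set (α → Bool)) Y} = ∅ := by
          ext Y
          simp only [Set.mem_setOf_eq, Set.mem_empty_iff_false, iff_false, not_and]
          rintro - ⟨g, hg⟩
          obtain ⟨h, hh, -⟩ := hg g
          exact hh
        rw [he]
        simp
      · simp
    · have hS : S = {fun _ => false} := hsub.antisymm (by
        rintro f rfl
        have := hsub hc
        simp only [Set.mem_singleton_iff] at this
        rwa [← this])
      constructor
      · calc ({Y | Y ⊆ (↑(∅ : Finset α) : Set α) ∧ StronglyShatters S Y}).ncard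
            ≤ ({∅} : Set (Set α)).ncard := by
              apply Set.ncard_le_ncard _ (Set.toFinite _)
              intro Y hY
              simp only [Finset.coe_empty, Set.subset_empty_iff] at hY
              simp [hY.1]
          _ = 1 := Set.ncard_singleton _
          _ = S.ncard := by rw [hS, Set.ncard_singleton]
      · calc S.ncard = 1 := by rw [hS, Set.ncard_singleton]
          _ ≤ ({Y | Y ⊆ (↑(∅ : Finset α) : Set α) ∧ Shatters S Y}).ncard := by
              rw [Nat.one_le_iff_ne_zero, ← Nat.pos_iff_ne_zero, Set.ncard_pos (Set.toFinite _)]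
              exact ⟨∅, by simp, fun f => ⟨c, hc, fun x hx => absurd hx (by simp)⟩⟩
  | @insert a E' ha IH =>
    intro S hsupp
    set S0 : Set (α → Bool) := {f ∈ S | f a = false} with hS0def
    set St : Set (α → Bool) := {f ∈ S | f a = true} with hStdef
    set S1 : Set (α → Bool) := (fun f => Function.update f a false) '' St with hS1def
    -- support conditions
    have hsupp0 : ∀ f ∈ S0, ∀ b, b ∉ E' → f b = false := by
      rintro f ⟨hfS, hfa⟩ b hb
      by_cases hba : b = a
      · rwa [hba]
      · exact hsupp f hfS b (by simp [hba, hb])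
    have hsupp1 : ∀ f ∈ S1, ∀ b, b ∉ E' → f b = false := by
      rintro f ⟨f0, ⟨hf0S, hf0a⟩, rfl⟩ b hb
      by_cases hba : b = a
      · subst hba; simp
      · simp only [Function.update_of_ne hba]
        exact hsupp f0 hf0S b (by simp [hba, hb])
    have hsuppU : ∀ f ∈ S0 ∪ S1, ∀ b, b ∉ E' → f b = false := by
      rintro f (hf | hf) b hb
      exacts [hsupp0 f hf b hb, hsupp1 f hf b hb]
    have hsuppI : ∀ f ∈ S0 ∩ S1, ∀ b, b ∉ E' → f b = false :=
      fun f hf => hsupp0 f hf.1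
    -- cardinality split : |S| = |S0| + |S1|
    have hinj : Set.InjOn (fun f => Function.update f a false) St := by
      rintro f ⟨-, hfa⟩ g ⟨-, hga⟩ h
      funext x
      by_cases hx : x = a
      · subst hx; rw [hfa, hga]
      · have := congrFun h x
        simpa [Function.update_of_ne hx] using this
    have hcard1 : S1.ncard = St.ncard := Set.ncard_image_of_injOn hinj
    have hScard : S.ncard = S0.ncard + S1.ncard := by
      have hU : S = S0 ∪ St := by
        ext f; constructor
        · intro hf; rcases Bool.eq_false_or_eq_true (f a) with h | h
          · exact Or.inr ⟨hf, h⟩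
          · exact Or.inl ⟨hf, h⟩
        · rintro (⟨hf, -⟩ | ⟨hf, -⟩) <;> exact hf
      rw [hU, Set.ncard_union_eq ?_ (Set.toFinite _) (Set.toFinite _), hcard1]
      rw [Set.disjoint_left]
      rintro f ⟨-, h0⟩ ⟨-, h1⟩
      rw [h0] at h1; exact Bool.false_ne_true h1
    have hIH_U := IH (S0 ∪ S1) hsuppU
    have hIH_I := IH (S0 ∩ S1) hsuppI
    have hcardUI : (S0 ∪ S1).ncard + (S0 ∩ S1).ncard = S.ncard := by
      rw [hScard]
      exact Set.ncard_union_add_ncard_inter _ _ (Set.toFinite _) (Set.toFinite _)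
    -- key shattering lemmas
    have L1 : ∀ Y : Set α, a ∉ Y → StronglyShatters S Y → StronglyShatters (S0 ∪ S1) Y := by
      rintro Y haY ⟨g, hg⟩
      have haYc : a ∈ Yᶜ := haY
      rcases Bool.eq_false_or_eq_true (g a) with hb | hb
      case inr =>
        refine ⟨g, fun f => ?_⟩
        obtain ⟨h, hS, hfY, hgYc⟩ := hg f
        exact ⟨h, Or.inl ⟨hS, (hgYc haYc).trans hb⟩, hfY, hgYc⟩
      case inl =>
        refine ⟨Function.update g a false, fun f => ?_⟩
        obtain ⟨h, hS, hfY, hgYc⟩ := hg f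
        have hha : h a = true := (hgYc haYc).trans hb
        refine ⟨Function.update h a false, Or.inr ⟨h, ⟨hS, hha⟩, rfl⟩, ?_, ?_⟩
        · intro y hy
          have hya : y ≠ a := fun e => haY (e ▸ hy)
          rw [Function.update_of_ne hya]; exact hfY hy
        · intro y hy
          by_cases hya : y = a
          · subst hya; simp
          · rw [Function.update_of_ne hya, Function.update_of_ne hya]; exact hgYc hy
    have L2 : ∀ Y : Set α, a ∉ Y → StronglyShatters S (insert a Y) →
        StronglyShatters (S0 ∩ S1) Y := by
      rintro Y haY ⟨g, hg⟩
      refine ⟨Function.update g a false, fun f => ?_⟩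
      obtain ⟨h0, h0S, h0f, h0g⟩ := hg (Function.update f a false)
      obtain ⟨h1, h1S, h1f, h1g⟩ := hg (Function.update f a true)
      have h0a : h0 a = false := by
        have := h0f (Set.mem_insert a Y); simpa using this
      have h1a : h1 a = true := by
        have := h1f (Set.mem_insert a Y); simpa using this
      have heq : Function.update h1 a false = h0 := by
        funext x
        by_cases hx : x = a
        · subst hx; simp [h0a]
        · rw [Function.update_of_ne hx]
          by_cases hxY : x ∈ Y
          · have e1 := h1f (Set.mem_insert_of_mem a hxY)
            have e0 := h0f (Set.mem_insert_of_mem a hxY)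
            rw [Function.update_of_ne hx] at e1 e0
            rw [e1, e0]
          · have hxc : x ∈ (insert a Y)ᶜ := by simp [hx, hxY]
            rw [h1g hxc, h0g hxc]
      refine ⟨h0, ⟨⟨h0S, h0a⟩, ⟨h1, ⟨h1S, h1a⟩, heq⟩⟩, ?_, ?_⟩
      · intro y hy
        have hya : y ≠ a := fun e => haY (e ▸ hy)
        have := h0f (Set.mem_insert_of_mem a hy)
        rwa [Function.update_of_ne hya] at this
      · intro y hy
        by_cases hya : y = a
        · subst hya; simp [h0a]
        · have hyY : y ∉ Y := hy
          have hyc : y ∈ (insert a Y)ᶜ := by simp [hya, hyY]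
          rw [h0g hyc, Function.update_of_ne hya]
    have U1 : ∀ Y : Set α, a ∉ Y → Shatters (S0 ∪ S1) Y → Shatters S Y := by
      intro Y haY hsh f
      obtain ⟨h, hh, hfY⟩ := hsh f
      rcases hh with ⟨hS, -⟩ | ⟨f0, ⟨hf0S, -⟩, rfl⟩
      · exact ⟨h, hS, hfY⟩
      · refine ⟨f0, hf0S, fun y hy => ?_⟩
        have hya : y ≠ a := fun e => haY (e ▸ hy)
        have := hfY hy
        simpa [Function.update_of_ne hya] using this
    have U2 : ∀ Y : Set α, a ∉ Y → Shatters (S0 ∩ S1) Y → Shatters S (insert a Y) := by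
      intro Y haY hsh f
      obtain ⟨h, ⟨⟨hhS, hha⟩, f0, ⟨hf0S, hf0a⟩, hupd⟩, hfY⟩ := hsh f
      rcases Bool.eq_false_or_eq_true (f a) with hb | hb
      case inr =>
        refine ⟨h, hhS, fun y hy => ?_⟩
        rcases hy with rfl | hy
        · rw [hha, hb]
        · exact hfY hy
      case inl =>
        refine ⟨f0, hf0S, fun y hy => ?_⟩
        rcases hy with rfl | hy
        · rw [hf0a, hb]
        · have hya : y ≠ a := fun e => haY (e ▸ hy)
          have h2 := congrFun hupd y
          simp only [Function.update_of_ne hya] at h2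
          rw [h2]; exact hfY hy
    constructor
    · -- lower bound
      set C := {Y | Y ⊆ (↑(insert a E') : Set α) ∧ StronglyShatters S Y ∧ a ∉ Y} with hC
      set D := {Y | Y ⊆ (↑(insert a E') : Set α) ∧ StronglyShatters S Y ∧ a ∈ Y} with hD
      have hsplit : {Y | Y ⊆ (↑(insert a E') : Set α) ∧ StronglyShatters S Y} = C ∪ D := by
        ext Y
        simp only [hC, hD, Set.mem_setOf_eq, Set.mem_union]
        tauto
      have hdisj : Disjoint C D := by
        rw [Set.disjoint_left]; rintro Y ⟨-, -, h1⟩ ⟨-, -, h2⟩; exact h1 h2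
      have hCle : C.ncard ≤ (S0 ∪ S1).ncard := by
        refine le_trans (Set.ncard_le_ncard ?_ (Set.toFinite _)) hIH_U.1
        rintro Y ⟨hYsub, hYsh, haY⟩
        refine ⟨fun x hx => ?_, L1 Y haY hYsh⟩
        have := hYsub hx
        simp only [Finset.coe_insert, Set.mem_insert_iff] at this
        rcases this with rfl | h
        · exact absurd hx haY
        · exact h
      have hDle : D.ncard ≤ (S0 ∩ S1).ncard := by
        have himg : (fun Y => Y \ {a}) '' D ⊆
            {Y | Y ⊆ (↑E' : Set α) ∧ StronglyShatters (S0 ∩ S1) Y} := by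
          rintro - ⟨Y, ⟨hYsub, hYsh, haY⟩, rfl⟩
          refine ⟨fun x hx => ?_, ?_⟩
          · have h1 := hYsub hx.1
            simp only [Finset.coe_insert, Set.mem_insert_iff] at h1
            rcases h1 with rfl | h
            · exact absurd rfl hx.2
            · exact h
          · refine L2 _ (by simp) ?_
            rwa [Set.insert_diff_singleton, Set.insert_eq_of_mem haY]
        have hinjD : Set.InjOn (fun Y => Y \ {a}) D := by
          rintro Y ⟨-, -, haY⟩ Z ⟨-, -, haZ⟩ h
          have h' : Y \ {a} = Z \ {a} := h
          have : insert a (Y \ {a}) = insert a (Z \ {a}) := by rw [h']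
          rwa [Set.insert_diff_singleton, Set.insert_eq_of_mem haY,
            Set.insert_diff_singleton, Set.insert_eq_of_mem haZ] at this
        calc D.ncard = ((fun Y => Y \ {a}) '' D).ncard := (Set.ncard_image_of_injOn hinjD).symm
          _ ≤ _ := le_trans (Set.ncard_le_ncard himg (Set.toFinite _)) hIH_I.1
      calc ({Y | Y ⊆ (↑(insert a E') : Set α) ∧ StronglyShatters S Y}).ncard
          = C.ncard + D.ncard := by
            rw [hsplit, Set.ncard_union_eq hdisj (Set.toFinite _) (Set.toFinite _)]
        _ ≤ (S0 ∪ S1).ncard + (S0 ∩ S1).ncard := Nat.add_le_add hCle hDle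
        _ = S.ncard := hcardUI
    · -- upper bound
      set A := {Y | Y ⊆ (↑E' : Set α) ∧ Shatters (S0 ∪ S1) Y} with hA
      set B0 := {Y | Y ⊆ (↑E' : Set α) ∧ Shatters (S0 ∩ S1) Y} with hB0
      set B := (insert a) '' B0 with hB
      have hnotinA : ∀ Y ∈ A, a ∉ Y := fun Y hY haY => ha (hY.1 haY)
      have hnotinB0 : ∀ Y ∈ B0, a ∉ Y := fun Y hY haY => ha (hY.1 haY)
      have hAsub : A ⊆ {Y | Y ⊆ (↑(insert a E') : Set α) ∧ Shatters S Y} := by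
        rintro Y ⟨hYsub, hYsh⟩
        exact ⟨hYsub.trans (by simp), U1 Y (fun haY => ha (hYsub haY)) hYsh⟩
      have hBsub : B ⊆ {Y | Y ⊆ (↑(insert a E') : Set α) ∧ Shatters S Y} := by
        rintro - ⟨Y, ⟨hYsub, hYsh⟩, rfl⟩
        refine ⟨?_, U2 Y (fun haY => ha (hYsub haY)) hYsh⟩
        rw [Finset.coe_insert]
        exact Set.insert_subset_insert hYsub
      have hdisj : Disjoint A B := by
        rw [Set.disjoint_left]
        rintro Y hYA ⟨Z, hZ, rfl⟩
        exact hnotinA _ hYA (Set.mem_insert a Z)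
      have hinjB : Set.InjOn (insert a) B0 := by
        intro Y hY Z hZ h
        have : insert a Y \ {a} = insert a Z \ {a} := by rw [h]
        rwa [Set.insert_diff_self_of_notMem (hnotinB0 _ hY),
          Set.insert_diff_self_of_notMem (hnotinB0 _ hZ)] at this
      calc S.ncard = (S0 ∪ S1).ncard + (S0 ∩ S1).ncard := hcardUI.symm
        _ ≤ A.ncard + B0.ncard := Nat.add_le_add hIH_U.2 hIH_I.2
        _ = A.ncard + B.ncard := by rw [hB, Set.ncard_image_of_injOn hinjB]
        _ = (A ∪ B).ncard := (Set.ncard_union_eq hdisj (Set.toFinite _) (Set.toFinite _)).symm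
        _ ≤ _ := Set.ncard_le_ncard (Set.union_subset hAsub hBsub) (Set.toFinite _)

end aux


/-- Sandwich Theorem: `|sstr 𝕊| ≤ |𝕊| ≤ |str 𝕊|`. -/
theorem sandwich {α : Type*} [Fintype α] (S : Set (α → Bool)) :
    (sstr S).ncard ≤ S.ncard ∧ S.ncard ≤ (str S).ncard := by
  classical
  have h := sandwich_key (Finset.univ : Finset α) S (fun f _ a haE => absurd (Finset.mem_univ a) haE)
  have e1 : {Y | Y ⊆ (↑(Finset.univ : Finset α) : Set α) ∧ StronglyShatters S Y} = sstr S := by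
    ext Y; simp [sstr, Set.subset_univ]
  have e2 : {Y | Y ⊆ (↑(Finset.univ : Finset α) : Set α) ∧ Shatters S Y} = str S := by
    ext Y; simp [str, Set.subset_univ]
  rw [e1, e2] at h
  exact h
end

section
/- (Sauer-Shelah Lemma) Let 𝕊 = (S, {0,1}^X) be a system with |X| = n and S nonempty, and let vc(𝕊) = max{|Y| : Y ∈ str(𝕊)}. Then |𝕊| ≤ Σ_{i=0}^{vc(𝕊)} C(n, i). -/
/-- Sauer-Shelah Lemma: if `S ≠ ∅`, `|X| = n` and `v = vc(𝕊)` is the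
maximum cardinality of a shattered set, then `|𝕊| ≤ Σ_{i=0}^{v} C(n,i)`. -/
theorem sauer_shelah {α : Type*} [Fintype α] (S : Set (α → Bool))
    (hS : S.Nonempty) (n v : ℕ) (hn : Fintype.card α = n)
    (hv_mem : ∃ Y : Set α, Shatters S Y ∧ Y.ncard = v)
    (hv_max : ∀ Y : Set α, Shatters S Y → Y.ncard ≤ v) :
    S.ncard ≤ ∑ i ∈ Finset.range (v + 1), n.choose i := by
  classical
  have hfin : S.Finite := Set.toFinite S
  set ι : (α → Bool) → Finset α := fun f => Finset.univ.filter (fun a => f a = true) with hι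
  have hinj : Function.Injective ι := by
    intro f g hfg
    funext a
    have : a ∈ ι f ↔ a ∈ ι g := by rw [hfg]
    simp only [hι, Finset.mem_filter, Finset.mem_univ, true_and] at this
    cases hfa : f a <;> cases hga : g a <;> simp [hfa, hga] at this ⊢
  set 𝒜 : Finset (Finset α) := hfin.toFinset.image ι with h𝒜
  have hcard : S.ncard = 𝒜.card := by
    rw [h𝒜, Finset.card_image_of_injective _ hinj, Set.ncard_eq_toFinset_card _ hfin]
  -- every set shattered (in the Finset sense) by 𝒜 is shattered (in the Set sense) by S
  have hshat : ∀ t : Finset α, 𝒜.Shatters t → Shatters S (↑t : Set α) := by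
    intro t ht f
    have hsub : t.filter (fun a => f a = true) ⊆ t := Finset.filter_subset _ _
    obtain ⟨u, hu𝒜, hut⟩ := ht hsub
    rw [h𝒜, Finset.mem_image] at hu𝒜
    obtain ⟨h, hhS, rfl⟩ := hu𝒜
    refine ⟨h, hfin.mem_toFinset.mp hhS, fun a ha => ?_⟩
    have ha' : a ∈ t := ha
    have h1 : a ∈ t ∩ ι h ↔ a ∈ t.filter (fun a => f a = true) := by rw [hut]
    simp only [hι, Finset.mem_inter, Finset.mem_filter, Finset.mem_univ, true_and, ha',
      true_and] at h1
    cases hha : h a <;> cases hfa : f a <;> simp [hha, hfa] at h1 ⊢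
  -- bound the cardinality of sets in the shatterer
  have hbound : ∀ t ∈ 𝒜.shatterer, t.card ≤ v := by
    intro t ht
    have := hv_max (↑t : Set α) (hshat t (Finset.mem_shatterer.mp ht))
    rwa [Set.ncard_coe_finset] at this
  have hsubset : 𝒜.shatterer ⊆ (Finset.range (v + 1)).biUnion
      (fun i => Finset.univ.powersetCard i) := by
    intro t ht
    refine Finset.mem_biUnion.mpr ⟨t.card, Finset.mem_range.mpr ?_, ?_⟩
    · exact Nat.lt_succ_of_le (hbound t ht)
    · simp [Finset.mem_powersetCard]
  calc S.ncard = 𝒜.card := hcard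
    _ ≤ 𝒜.shatterer.card := 𝒜.card_le_card_shatterer
    _ ≤ ((Finset.range (v + 1)).biUnion (fun i => Finset.univ.powersetCard i)).card :=
        Finset.card_le_card hsubset
    _ ≤ ∑ i ∈ Finset.range (v + 1), (Finset.univ.powersetCard i).card :=
        Finset.card_biUnion_le
    _ = ∑ i ∈ Finset.range (v + 1), n.choose i := by
        refine Finset.sum_congr rfl fun i _ => ?_
        rw [Finset.card_powersetCard, Finset.card_univ, hn]
end

section
/- A system 𝕊 over a finite set X is shattering-extremal if and only if its complement ¬𝕊 is shattering-extremal. -/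
/-- A system is shattering-extremal if `str 𝕊 = sstr 𝕊`. -/
def ShatteringExtremal {α : Type*} (S : Set (α → Bool)) : Prop :=
  str S = sstr S

open Classical in
lemma shatters_iff_not_ssh {α : Type*} (S : Set (α → Bool)) (Y : Set α) :
    Shatters S Y ↔ ¬ StronglyShatters Sᶜ Yᶜ := by
  constructor
  · rintro hS ⟨g, hg⟩
    obtain ⟨h, hhS, hhg⟩ := hS g
    obtain ⟨h', hh'c, hh', hh'g⟩ := hg h
    have : h' = h := by
      funext a
      by_cases ha : a ∈ Y
      · have := hh'g (by simpa using ha)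
        simpa [this] using (hhg ha).symm
      · exact hh' ha
    exact hh'c (this ▸ hhS)
  · intro hns f
    by_contra hc
    push_neg at hc
    apply hns
    refine ⟨f, fun f' => ?_⟩
    refine ⟨fun a => if a ∈ Y then f a else f' a, ?_, ?_, ?_⟩
    · intro hmem
      exact hc _ hmem (fun a ha => by simp [ha])
    · intro a ha
      have ha' : a ∉ Y := ha
      simp [ha']
    · intro a ha
      simp only [compl_compl] at ha
      simp [ha]

/-- `𝕊` is shattering-extremal iff `¬𝕊` is shattering-extremal. -/
theorem se_iff_compl_se {α : Type*} [Fintype α] (S : Set (α → Bool)) :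
    ShatteringExtremal S ↔ ShatteringExtremal Sᶜ := by
  have key : ∀ (T : Set (α → Bool)),
      ShatteringExtremal T ↔ ∀ Y : Set α, Shatters T Y ↔ StronglyShatters T Y := by
    intro T
    constructor
    · intro h Y
      exact ⟨fun hs => (h ▸ hs : Y ∈ sstr T), fun hs => (h ▸ hs : Y ∈ str T)⟩
    · intro h
      ext Y
      exact h Y
  rw [key, key]
  have ssh_iff : ∀ (T : Set (α → Bool)) (Y : Set α),
      StronglyShatters T Y ↔ ¬ Shatters Tᶜ Yᶜ := by
    intro T Y
    rw [shatters_iff_not_ssh, compl_compl, compl_compl, not_not]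
  constructor
  · intro h Y
    have h1 := shatters_iff_not_ssh Sᶜ Y
    have h2 := ssh_iff Sᶜ Y
    rw [compl_compl] at h1 h2
    rw [h1, h2]
    exact not_congr (h Yᶜ).symm
  · intro h Y
    rw [shatters_iff_not_ssh S Y, ssh_iff S Y]
    exact not_congr (h Yᶜ).symm
end

section
/- Let 𝕊 be a system over a finite set X. The following statements are equivalent: (i) 𝕊 is shattering-extremal, i.e. str(𝕊) = sstr(𝕊); (ii) |sstr(𝕊)| = |𝕊|; (iii) |𝕊| = |str(𝕊)|. -/
section Helpers

variable {α : Type*} [DecidableEq α]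

/-- part of S with x-value false -/
def sys0 (S : Set (α → Bool)) (x : α) : Set (α → Bool) :=
  {f | f ∈ S ∧ f x = false}

/-- x-false versions of members of S with x-value true -/
def sys1 (S : Set (α → Bool)) (x : α) : Set (α → Bool) :=
  {f | f x = false ∧ Function.update f x true ∈ S}

lemma sstr_subset_str {S : Set (α → Bool)} : sstr S ⊆ str S := by
  rintro Y ⟨g, hg⟩ f
  obtain ⟨h, hS, h1, _⟩ := hg f
  exact ⟨h, hS, h1⟩

lemma str_mono {S T : Set (α → Bool)} (hST : S ⊆ T) : str S ⊆ str T := by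
  intro Y hY f
  obtain ⟨h, hS, h1⟩ := hY f
  exact ⟨h, hST hS, h1⟩

lemma sstr_mono {S T : Set (α → Bool)} (hST : S ⊆ T) : sstr S ⊆ sstr T := by
  rintro Y ⟨g, hg⟩
  refine ⟨g, fun f => ?_⟩
  obtain ⟨h, hS, h1, h2⟩ := hg f
  exact ⟨h, hST hS, h1, h2⟩

lemma notMem_of_xfalse {S : Set (α → Bool)} {x : α}
    (hS : ∀ f ∈ S, f x = false) {Y : Set α} (hY : Y ∈ str S) : x ∉ Y := by
  intro hx
  obtain ⟨h, hmem, heq⟩ := hY (fun _ => true)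
  have := heq hx
  simp [hS h hmem] at this

lemma sys0_xfalse (S : Set (α → Bool)) (x : α) : ∀ f ∈ sys0 S x, f x = false :=
  fun _ hf => hf.2

lemma sys1_xfalse (S : Set (α → Bool)) (x : α) : ∀ f ∈ sys1 S x, f x = false :=
  fun _ hf => hf.1

lemma union_xfalse (S : Set (α → Bool)) (x : α) :
    ∀ f ∈ sys0 S x ∪ sys1 S x, f x = false := by
  rintro f (hf | hf)
  · exact hf.2
  · exact hf.1

end Helpers

set_option linter.unusedSectionVars false

section Decomp

variable {α : Type*} [DecidableEq α] {S : Set (α → Bool)} {x : α}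

lemma update_false_mem_sys1 {h : α → Bool} (hS : h ∈ S) (hx : h x = true) :
    Function.update h x false ∈ sys1 S x := by
  constructor
  · simp
  · have : Function.update (Function.update h x false) x true = h := by
      funext y
      by_cases hy : y = x
      · subst hy; simp [hx]
      · simp [Function.update_of_ne hy]
    rw [this]; exact hS

lemma strA {Y : Set α} (hxY : x ∉ Y) :
    Y ∈ str S ↔ Y ∈ str (sys0 S x ∪ sys1 S x) := by
  constructor
  · intro hY f
    obtain ⟨h, hS, heq⟩ := hY f
    rcases Bool.eq_false_or_eq_true (h x) with hx | hx
    · refine ⟨Function.update h x false, Or.inr (update_false_mem_sys1 hS hx), ?_⟩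
      intro y hy
      rw [Function.update_of_ne (ne_of_mem_of_not_mem hy hxY)]
      exact heq hy
    · exact ⟨h, Or.inl ⟨hS, hx⟩, heq⟩
  · intro hY f
    obtain ⟨h, hU, heq⟩ := hY f
    rcases hU with hU | hU
    · exact ⟨h, hU.1, heq⟩
    · refine ⟨Function.update h x true, hU.2, ?_⟩
      intro y hy
      rw [Function.update_of_ne (ne_of_mem_of_not_mem hy hxY)]
      exact heq hy

lemma strB {Z : Set α} (hxZ : x ∉ Z) :
    insert x Z ∈ str S ↔ Z ∈ str (sys0 S x) ∧ Z ∈ str (sys1 S x) := by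
  constructor
  · intro hY
    constructor
    · intro f
      obtain ⟨h, hS, heq⟩ := hY (Function.update f x false)
      have hx : h x = false := by
        have := heq (Set.mem_insert x Z); simpa using this
      refine ⟨h, ⟨hS, hx⟩, fun y hy => ?_⟩
      have := heq (Set.mem_insert_of_mem x hy)
      rwa [Function.update_of_ne (ne_of_mem_of_not_mem hy hxZ)] at this
    · intro f
      obtain ⟨h, hS, heq⟩ := hY (Function.update f x true)
      have hx : h x = true := by
        have := heq (Set.mem_insert x Z); simpa using this
      refine ⟨Function.update h x false, update_false_mem_sys1 hS hx, fun y hy => ?_⟩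
      have := heq (Set.mem_insert_of_mem x hy)
      rw [Function.update_of_ne (ne_of_mem_of_not_mem hy hxZ)] at this ⊢
      exact this
  · rintro ⟨h0, h1⟩ f
    rcases Bool.eq_false_or_eq_true (f x) with hfx | hfx
    · obtain ⟨h, hS, heq⟩ := h1 f
      refine ⟨Function.update h x true, hS.2, fun y hy => ?_⟩
      rcases hy with rfl | hy
      · simp [hfx]
      · rw [Function.update_of_ne (ne_of_mem_of_not_mem hy hxZ)]
        exact heq hy
    · obtain ⟨h, hS, heq⟩ := h0 f
      refine ⟨h, hS.1, fun y hy => ?_⟩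
      rcases hy with rfl | hy
      · rw [hS.2, hfx]
      · exact heq hy

end Decomp

section Decomp2

variable {α : Type*} [DecidableEq α] {S : Set (α → Bool)} {x : α}

lemma sstrC {Y : Set α} (hxY : x ∉ Y) :
    Y ∈ sstr S ↔ Y ∈ sstr (sys0 S x) ∪ sstr (sys1 S x) := by
  constructor
  · rintro ⟨g, hg⟩
    rcases Bool.eq_false_or_eq_true (g x) with hgx | hgx
    · right
      refine ⟨Function.update g x false, fun f => ?_⟩
      obtain ⟨h, hS, h1, h2⟩ := hg f
      have hhx : h x = true := by rw [h2 hxY, hgx]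
      refine ⟨Function.update h x false, update_false_mem_sys1 hS hhx, ?_, ?_⟩
      · intro y hy
        rw [Function.update_of_ne (ne_of_mem_of_not_mem hy hxY)]
        exact h1 hy
      · intro y hy
        by_cases hyx : y = x
        · subst hyx; simp
        · rw [Function.update_of_ne hyx, Function.update_of_ne hyx]
          exact h2 hy
    · left
      refine ⟨g, fun f => ?_⟩
      obtain ⟨h, hS, h1, h2⟩ := hg f
      have hhx : h x = false := by rw [h2 hxY, hgx]
      exact ⟨h, ⟨hS, hhx⟩, h1, h2⟩
  · rintro (⟨g, hg⟩ | ⟨g, hg⟩)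
    · refine ⟨Function.update g x false, fun f => ?_⟩
      obtain ⟨h, hS, h1, h2⟩ := hg f
      refine ⟨h, hS.1, h1, fun y hy => ?_⟩
      by_cases hyx : y = x
      · subst hyx; simp [hS.2]
      · rw [Function.update_of_ne hyx]; exact h2 hy
    · refine ⟨Function.update g x true, fun f => ?_⟩
      obtain ⟨h, hS, h1, h2⟩ := hg f
      refine ⟨Function.update h x true, hS.2, fun y hy => ?_, fun y hy => ?_⟩
      · rw [Function.update_of_ne (ne_of_mem_of_not_mem hy hxY)]
        exact h1 hy
      · by_cases hyx : y = x
        · subst hyx; simp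
        · rw [Function.update_of_ne hyx, Function.update_of_ne hyx]
          exact h2 hy

lemma sstrD {Z : Set α} (hxZ : x ∉ Z) :
    insert x Z ∈ sstr S ↔ Z ∈ sstr (sys0 S x ∩ sys1 S x) := by
  constructor
  · rintro ⟨g, hg⟩
    refine ⟨Function.update g x false, fun f => ?_⟩
    obtain ⟨h0, hS0, e0, e0'⟩ := hg (Function.update f x false)
    obtain ⟨h1, hS1, e1, e1'⟩ := hg (Function.update f x true)
    have hx0 : h0 x = false := by simpa using e0 (Set.mem_insert x Z)
    have hx1 : h1 x = true := by simpa using e1 (Set.mem_insert x Z)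
    have hup : Function.update h0 x true = h1 := by
      funext y
      by_cases hyx : y = x
      · subst hyx; simp [hx1]
      · rw [Function.update_of_ne hyx]
        by_cases hyZ : y ∈ Z
        · have := e0 (Set.mem_insert_of_mem x hyZ)
          have := e1 (Set.mem_insert_of_mem x hyZ)
          rw [e0 (Set.mem_insert_of_mem x hyZ), e1 (Set.mem_insert_of_mem x hyZ),
            Function.update_of_ne hyx, Function.update_of_ne hyx]
        · have hyc : y ∈ (insert x Z)ᶜ := by
            simp only [Set.mem_compl_iff, Set.mem_insert_iff]
            push_neg
            exact ⟨hyx, hyZ⟩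
          rw [e0' hyc, e1' hyc]
    refine ⟨h0, ⟨⟨hS0, hx0⟩, hx0, hup ▸ hS1⟩, fun y hy => ?_, fun y hy => ?_⟩
    · have := e0 (Set.mem_insert_of_mem x hy)
      rwa [Function.update_of_ne (ne_of_mem_of_not_mem hy hxZ)] at this
    · by_cases hyx : y = x
      · subst hyx; simp [hx0]
      · rw [Function.update_of_ne hyx]
        refine e0' ?_
        simp only [Set.mem_compl_iff, Set.mem_insert_iff]
        push_neg
        exact ⟨hyx, hy⟩
  · rintro ⟨g, hg⟩
    refine ⟨g, fun f => ?_⟩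
    obtain ⟨h, ⟨hS0, hS1⟩, h1, h2⟩ := hg f
    rcases Bool.eq_false_or_eq_true (f x) with hfx | hfx
    · refine ⟨Function.update h x true, hS1.2, fun y hy => ?_, fun y hy => ?_⟩
      · rcases hy with rfl | hy
        · simp [hfx]
        · rw [Function.update_of_ne (ne_of_mem_of_not_mem hy hxZ)]
          exact h1 hy
      · have hyx : y ≠ x := fun h' => hy (h' ▸ Set.mem_insert x Z)
        rw [Function.update_of_ne hyx]
        exact h2 (fun hyZ => hy (Set.mem_insert_of_mem x hyZ))
    · refine ⟨h, hS0.1, fun y hy => ?_, fun y hy => ?_⟩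
      · rcases hy with rfl | hy
        · rw [hS0.2, hfx]
        · exact h1 hy
      · exact h2 (fun hyZ => hy (Set.mem_insert_of_mem x hyZ))

end Decomp2

section SetIdent

variable {α : Type*} [DecidableEq α] {S : Set (α → Bool)} {x : α}

lemma str_decomp (S : Set (α → Bool)) (x : α) :
    str S = str (sys0 S x ∪ sys1 S x) ∪
      (insert x) '' (str (sys0 S x) ∩ str (sys1 S x)) := by
  ext Y
  by_cases hx : x ∈ Y
  · have hY : insert x (Y \ {x}) = Y := by
      rw [Set.insert_diff_singleton, Set.insert_eq_self.mpr hx]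
    have hxd : x ∉ Y \ {x} := fun h => h.2 rfl
    constructor
    · intro hYs
      right
      refine ⟨Y \ {x}, (strB hxd).mp ?_, hY⟩
      rwa [hY]
    · rintro (hYs | ⟨Z, hZ, rfl⟩)
      · exact absurd hx (notMem_of_xfalse (union_xfalse S x) hYs)
      · have hxZ : x ∉ Z := notMem_of_xfalse (sys0_xfalse S x) hZ.1
        exact (strB hxZ).mpr hZ
  · constructor
    · intro hYs
      exact Or.inl ((strA hx).mp hYs)
    · rintro (hYs | ⟨Z, hZ, rfl⟩)
      · exact (strA hx).mpr hYs
      · exact absurd (Set.mem_insert x Z) hx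
  
lemma sstr_decomp (S : Set (α → Bool)) (x : α) :
    sstr S = (sstr (sys0 S x) ∪ sstr (sys1 S x)) ∪
      (insert x) '' (sstr (sys0 S x ∩ sys1 S x)) := by
  ext Y
  by_cases hx : x ∈ Y
  · have hY : insert x (Y \ {x}) = Y := by
      rw [Set.insert_diff_singleton, Set.insert_eq_self.mpr hx]
    have hxd : x ∉ Y \ {x} := fun h => h.2 rfl
    constructor
    · intro hYs
      right
      refine ⟨Y \ {x}, (sstrD hxd).mp ?_, hY⟩
      rwa [hY]
    · rintro (hYs | ⟨Z, hZ, rfl⟩)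
      · rcases hYs with hYs | hYs
        · exact absurd hx
            (notMem_of_xfalse (sys0_xfalse S x) (sstr_subset_str hYs))
        · exact absurd hx
            (notMem_of_xfalse (sys1_xfalse S x) (sstr_subset_str hYs))
      · have hxZ : x ∉ Z := notMem_of_xfalse
          (fun f hf => hf.1.2) (sstr_subset_str hZ)
        exact (sstrD hxZ).mpr hZ
  · constructor
    · intro hYs
      exact Or.inl ((sstrC hx).mp hYs)
    · rintro (hYs | ⟨Z, hZ, rfl⟩)
      · exact (sstrC hx).mpr hYs
      · exact absurd (Set.mem_insert x Z) hx

end SetIdent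

section Card

variable {α : Type*} [Fintype α] [DecidableEq α]

lemma ncard_split (S : Set (α → Bool)) (x : α) :
    S.ncard = (sys0 S x).ncard + (sys1 S x).ncard := by
  have hS : S = sys0 S x ∪ {f | f ∈ S ∧ f x = true} := by
    ext f
    simp only [sys0, Set.mem_union, Set.mem_setOf_eq]
    constructor
    · intro h
      rcases Bool.eq_false_or_eq_true (f x) with h' | h'
      · exact Or.inr ⟨h, h'⟩
      · exact Or.inl ⟨h, h'⟩
    · rintro (h | h) <;> exact h.1
  have himg : sys1 S x = (fun f => Function.update f x false) '' {f | f ∈ S ∧ f x = true} := by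
    ext g
    constructor
    · rintro ⟨hgx, hgS⟩
      refine ⟨Function.update g x true, ⟨hgS, by simp⟩, ?_⟩
      funext y
      by_cases hyx : y = x
      · subst hyx; simp [hgx]
      · simp [Function.update_of_ne hyx]
    · rintro ⟨f, ⟨hfS, hfx⟩, rfl⟩
      refine ⟨by simp, ?_⟩
      have : Function.update (Function.update f x false) x true = f := by
        funext y
        by_cases hyx : y = x
        · subst hyx; simp [hfx]
        · simp [Function.update_of_ne hyx]
      rw [this]; exact hfS
  have hdisj : Disjoint (sys0 S x) {f | f ∈ S ∧ f x = true} := by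
    rw [Set.disjoint_left]
    rintro f ⟨_, hf0⟩ ⟨_, hf1⟩
    simp [hf0] at hf1
  have hinj : Set.InjOn (fun f => Function.update f x false) {f | f ∈ S ∧ f x = true} := by
    rintro f ⟨_, hfx⟩ g ⟨_, hgx⟩ hfg
    funext y
    by_cases hyx : y = x
    · subst hyx; rw [hfx, hgx]
    · have := congrFun hfg y
      simpa [Function.update_of_ne hyx] using this
  calc S.ncard = (sys0 S x ∪ {f | f ∈ S ∧ f x = true}).ncard := by rw [← hS]
    _ = (sys0 S x).ncard + {f | f ∈ S ∧ f x = true}.ncard := Set.ncard_union_eq hdisj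
    _ = (sys0 S x).ncard + (sys1 S x).ncard := by
        rw [himg, Set.ncard_image_of_injOn hinj]

lemma str_empty : str (∅ : Set (α → Bool)) = ∅ := by
  ext Y
  simp only [Set.mem_empty_iff_false, iff_false]
  intro hY
  obtain ⟨h, hh, -⟩ := hY (fun _ => false)
  exact hh

lemma str_const_false :
    str ({fun _ => false} : Set (α → Bool)) = {(∅ : Set α)} := by
  ext Y
  simp only [Set.mem_singleton_iff]
  constructor
  · intro hY
    rw [Set.eq_empty_iff_forall_notMem]
    intro y
    exact notMem_of_xfalse (x := y) (by rintro f rfl; rfl) hY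
  · rintro rfl
    intro f
    exact ⟨fun _ => false, rfl, fun y hy => absurd hy (Set.notMem_empty y)⟩

lemma sstr_const_false :
    sstr ({fun _ => false} : Set (α → Bool)) = {(∅ : Set α)} := by
  apply Set.Subset.antisymm
  · intro Y hY
    rw [← str_const_false]
    exact sstr_subset_str hY
  · rintro Y rfl
    exact ⟨fun _ => false, fun f =>
      ⟨fun _ => false, rfl, fun y hy => absurd hy (Set.notMem_empty y), fun y _ => rfl⟩⟩

end Card

lemma main_lemma {α : Type*} [Fintype α] [DecidableEq α] (E : Finset α) :
    ∀ S : Set (α → Bool), (∀ f ∈ S, ∀ y, y ∉ E → f y = false) →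
      ((sstr S).ncard ≤ S.ncard ∧ S.ncard ≤ (str S).ncard) ∧
      ((S.ncard = (str S).ncard → str S = sstr S) ∧
       ((sstr S).ncard = S.ncard → str S = sstr S)) := by
  induction E using Finset.induction_on with
  | empty =>
    intro S hsupp
    have hsub : S ⊆ {fun _ => false} := by
      intro f hf
      simp only [Set.mem_singleton_iff]
      funext y
      exact hsupp f hf y (Finset.notMem_empty y)
    rcases Set.subset_singleton_iff_eq.mp hsub with rfl | rfl
    · have hsstr : sstr (∅ : Set (α → Bool)) = ∅ := by
        have h : sstr (∅ : Set (α → Bool)) ⊆ str (∅ : Set (α → Bool)) := sstr_subset_str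
        rw [str_empty] at h
        exact Set.subset_empty_iff.mp h
      refine ⟨⟨?_, ?_⟩, ?_, ?_⟩ <;> simp [str_empty, hsstr]
    · refine ⟨⟨?_, ?_⟩, ?_, ?_⟩ <;>
        simp [str_const_false, sstr_const_false]
  | @insert x E hxE ih =>
    intro S hsupp
    set T0 := sys0 S x with hT0
    set T1 := sys1 S x with hT1
    -- support facts
    have hT0supp : ∀ f ∈ T0, ∀ y, y ∉ E → f y = false := by
      rintro f ⟨hfS, hfx⟩ y hy
      by_cases hyx : y = x
      · subst hyx; exact hfx
      · exact hsupp f hfS y (by simp [Finset.mem_insert, hyx, hy])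
    have hT1supp : ∀ f ∈ T1, ∀ y, y ∉ E → f y = false := by
      rintro f ⟨hfx, hfS⟩ y hy
      by_cases hyx : y = x
      · subst hyx; exact hfx
      · have := hsupp _ hfS y (by simp [Finset.mem_insert, hyx, hy])
        rwa [Function.update_of_ne hyx] at this
    have hUsupp : ∀ f ∈ T0 ∪ T1, ∀ y, y ∉ E → f y = false := by
      rintro f (hf | hf)
      · exact hT0supp f hf
      · exact hT1supp f hf
    have hIsupp : ∀ f ∈ T0 ∩ T1, ∀ y, y ∉ E → f y = false :=
      fun f hf => hT0supp f hf.1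
    obtain ⟨⟨ihU1, ihU2⟩, ihU3, ihU4⟩ := ih (T0 ∪ T1) hUsupp
    obtain ⟨⟨ihI1, ihI2⟩, ihI3, ihI4⟩ := ih (T0 ∩ T1) hIsupp
    obtain ⟨⟨ihT01, ihT02⟩, ihT03, ihT04⟩ := ih T0 hT0supp
    obtain ⟨⟨ihT11, ihT12⟩, ihT13, ihT14⟩ := ih T1 hT1supp
    -- basic cardinal identities
    have cS : S.ncard = T0.ncard + T1.ncard := ncard_split S x
    have cUI : (T0 ∪ T1).ncard + (T0 ∩ T1).ncard = T0.ncard + T1.ncard :=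
      Set.ncard_union_add_ncard_inter T0 T1
    -- x-freeness
    have hxfree0 : ∀ Y ∈ str T0, x ∉ Y :=
      fun Y hY => notMem_of_xfalse (sys0_xfalse S x) hY
    have hxfree1 : ∀ Y ∈ str T1, x ∉ Y :=
      fun Y hY => notMem_of_xfalse (sys1_xfalse S x) hY
    have hxfreeU : ∀ Y ∈ str (T0 ∪ T1), x ∉ Y :=
      fun Y hY => notMem_of_xfalse (union_xfalse S x) hY
    have hinj : ∀ F : Set (Set α), (∀ Y ∈ F, x ∉ Y) → Set.InjOn (insert x) F := by
      intro F hF Z1 h1 Z2 h2 h12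
      have := congrArg (· \ ({x} : Set α)) h12
      simpa [Set.insert_diff_self_of_notMem (hF Z1 h1),
        Set.insert_diff_self_of_notMem (hF Z2 h2)] using this
    -- str cardinality decomposition
    have hdisj_str : Disjoint (str (T0 ∪ T1)) ((insert x) '' (str T0 ∩ str T1)) := by
      rw [Set.disjoint_left]
      rintro Y hY ⟨Z, _, rfl⟩
      exact hxfreeU _ hY (Set.mem_insert x Z)
    have cstr : (str S).ncard = (str (T0 ∪ T1)).ncard + (str T0 ∩ str T1).ncard := by
      rw [str_decomp S x, Set.ncard_union_eq hdisj_str,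
        Set.ncard_image_of_injOn (hinj _ (fun Y hY => hxfree0 Y hY.1))]
    -- sstr cardinality decomposition
    have hdisj_sstr : Disjoint (sstr T0 ∪ sstr T1) ((insert x) '' (sstr (T0 ∩ T1))) := by
      rw [Set.disjoint_left]
      rintro Y hY ⟨Z, _, rfl⟩
      rcases hY with hY | hY
      · exact hxfree0 _ (sstr_subset_str hY) (Set.mem_insert x Z)
      · exact hxfree1 _ (sstr_subset_str hY) (Set.mem_insert x Z)
    have csstr : (sstr S).ncard = (sstr T0 ∪ sstr T1).ncard + (sstr (T0 ∩ T1)).ncard := by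
      rw [sstr_decomp S x, Set.ncard_union_eq hdisj_sstr,
        Set.ncard_image_of_injOn (hinj _
          (fun Y hY => hxfree0 Y (str_mono Set.inter_subset_left (sstr_subset_str hY))))]
    -- monotonicity inequalities
    have hsubI : str (T0 ∩ T1) ⊆ str T0 ∩ str T1 :=
      Set.subset_inter (str_mono Set.inter_subset_left) (str_mono Set.inter_subset_right)
    have leI : (str (T0 ∩ T1)).ncard ≤ (str T0 ∩ str T1).ncard :=
      Set.ncard_le_ncard hsubI
    have hsubU : sstr T0 ∪ sstr T1 ⊆ sstr (T0 ∪ T1) :=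
      Set.union_subset (sstr_mono Set.subset_union_left) (sstr_mono Set.subset_union_right)
    have leU : (sstr T0 ∪ sstr T1).ncard ≤ (sstr (T0 ∪ T1)).ncard :=
      Set.ncard_le_ncard hsubU
    have hsubI' : sstr (T0 ∩ T1) ⊆ sstr T0 ∩ sstr T1 :=
      Set.subset_inter (sstr_mono Set.inter_subset_left) (sstr_mono Set.inter_subset_right)
    have hsubUu : str T0 ∪ str T1 ⊆ str (T0 ∪ T1) :=
      Set.union_subset (str_mono Set.subset_union_left) (str_mono Set.subset_union_right)
    -- sandwich
    have sand2 : S.ncard ≤ (str S).ncard := by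
      rw [cstr, cS, ← cUI]
      omega
    have sand1 : (sstr S).ncard ≤ S.ncard := by
      rw [csstr, cS, ← cUI]
      omega
    refine ⟨⟨sand1, sand2⟩, ?_, ?_⟩
    · -- |S| = |str S| implies SE
      intro heq
      rw [cstr, cS, ← cUI] at heq
      have eU : (T0 ∪ T1).ncard = (str (T0 ∪ T1)).ncard := by omega
      have eInter : (str T0 ∩ str T1).ncard = (T0 ∩ T1).ncard := by omega
      have eI : (T0 ∩ T1).ncard = (str (T0 ∩ T1)).ncard := by omega
      have strI_eq : str (T0 ∩ T1) = str T0 ∩ str T1 :=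
        Set.eq_of_subset_of_ncard_le hsubI (by omega)
      -- inclusion–exclusion on str T0, str T1
      have cT : (str T0 ∪ str T1).ncard + (str T0 ∩ str T1).ncard
          = (str T0).ncard + (str T1).ncard :=
        Set.ncard_union_add_ncard_inter _ _
      have leUu : (str T0 ∪ str T1).ncard ≤ (str (T0 ∪ T1)).ncard :=
        Set.ncard_le_ncard hsubUu
      have eT0 : T0.ncard = (str T0).ncard := by omega
      have eT1 : T1.ncard = (str T1).ncard := by omega
      have strU_eq : str T0 ∪ str T1 = str (T0 ∪ T1) :=
        Set.eq_of_subset_of_ncard_le hsubUu (by omega)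
      rw [str_decomp S x, sstr_decomp S x, ← strU_eq, ← strI_eq,
        ihI3 eI, ihT03 eT0, ihT13 eT1]
    · -- |sstr S| = |S| implies SE
      intro heq
      rw [csstr, cS, ← cUI] at heq
      have eI : (sstr (T0 ∩ T1)).ncard = (T0 ∩ T1).ncard := by omega
      have eUu : (sstr T0 ∪ sstr T1).ncard = (T0 ∪ T1).ncard := by omega
      have eU : (sstr (T0 ∪ T1)).ncard = (T0 ∪ T1).ncard := by omega
      have sstrU_eq : sstr T0 ∪ sstr T1 = sstr (T0 ∪ T1) :=
        Set.eq_of_subset_of_ncard_le hsubU (by omega)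
      -- inclusion–exclusion on sstr T0, sstr T1
      have cT : (sstr T0 ∪ sstr T1).ncard + (sstr T0 ∩ sstr T1).ncard
          = (sstr T0).ncard + (sstr T1).ncard :=
        Set.ncard_union_add_ncard_inter _ _
      have leI' : (sstr (T0 ∩ T1)).ncard ≤ (sstr T0 ∩ sstr T1).ncard :=
        Set.ncard_le_ncard hsubI'
      have eT0 : (sstr T0).ncard = T0.ncard := by omega
      have eT1 : (sstr T1).ncard = T1.ncard := by omega
      have sstrI_eq : sstr (T0 ∩ T1) = sstr T0 ∩ sstr T1 :=
        Set.eq_of_subset_of_ncard_le hsubI' (by omega)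
      rw [str_decomp S x, sstr_decomp S x, ihU4 eU, ← sstrU_eq,
        ihT04 eT0, ihT14 eT1, ← sstrI_eq]


/-- the following are equivalent: (i) `str 𝕊 = sstr 𝕊`;
(ii) `|sstr 𝕊| = |𝕊|`; (iii) `|𝕊| = |str 𝕊|`. -/
theorem se_tfae {α : Type*} [Fintype α] (S : Set (α → Bool)) :
    [str S = sstr S, (sstr S).ncard = S.ncard, S.ncard = (str S).ncard].TFAE := by
  classical
  obtain ⟨⟨h1, h2⟩, h3, h4⟩ := main_lemma (Finset.univ : Finset α) S
    (fun f _ y hy => absurd (Finset.mem_univ y) hy)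
  tfae_have 1 → 2 := by
    intro h
    refine le_antisymm h1 ?_
    rw [h] at h2
    exact h2
  tfae_have 2 → 1 := h4
  tfae_have 1 → 3 := by
    intro h
    refine le_antisymm h2 ?_
    rw [h]
    exact h1
  tfae_have 3 → 1 := h3
  tfae_finish
end

section
/- Let G be a finite simple undirected graph. Then: (i) the number of orientations of G whose digraph contains a directed cycle is at least the number of edge subsets X ⊆ E such that G_X contains an (undirected) cycle; (ii) the number of acyclic orientations of G is at most the number of edge subsets X ⊆ E such that G_X is a forest. -/
/-- The arc relation of the digraph obtained by orienting the edges of `X ⊆ E(G)`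
according to `d` (relative to the reference orientation `ρ`): `d e = false` keeps
the reference direction `(ρ e).1 → (ρ e).2`, `d e = true` reverses it. -/
def arcsOn {V : Type*} (G : SimpleGraph V) (ρ : Sym2 V → V × V)
    (X : Set G.edgeSet) (d : G.edgeSet → Bool) : V → V → Prop :=
  fun u v => ∃ e : G.edgeSet, e ∈ X ∧
    ((d e = false ∧ ρ e.val = (u, v)) ∨ (d e = true ∧ ρ e.val = (v, u)))

/-- The arc relation of the digraph `G⃗^d` obtained by orienting all edges of `G`
according to `d`. -/
def arcs {V : Type*} (G : SimpleGraph V) (ρ : Sym2 V → V × V)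
    (d : G.edgeSet → Bool) : V → V → Prop :=
  arcsOn G ρ Set.univ d

/-- A digraph contains a directed cycle iff some vertex lies on a closed directed
walk of positive length. -/
def HasDiCycle {V : Type*} (R : V → V → Prop) : Prop :=
  ∃ v, Relation.TransGen R v v

/-- The subgraph `G_X` of `G` on the full vertex set, with edge set `X ⊆ E(G)`. -/
def subgraphOf {V : Type*} (G : SimpleGraph V) (X : Set G.edgeSet) : SimpleGraph V :=
  SimpleGraph.fromEdgeSet (Subtype.val '' X)

/-!
Deletion–contraction. For a non-loop edge `e = uv`, an acyclic orientation of `G` restricts to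
one of `G - e` with no path from the head of `e` back to its tail, and an acyclic orientation of
`G - e` to which `e` can be added in either direction stays acyclic in `G / e`. Counting with
inclusion–exclusion gives `a(G) ≤ a(G - e) + a(G / e)`, while forests split exactly,
`f(G) = f(G - e) + f(G / e)`, and loops admit no acyclic orientation at all. Contraction creates
loops and parallel edges, so the induction runs over multigraphs. Since there are as many
orientations as edge subsets, (i) is the complement of (ii).
-/

open Relation Finset

theorem not_hasDiCycle_map {W W' : Type*} {R : W → W → Prop} {f : W → W'} {c : W}
    (hf : ∀ x y, f x = f y → x = y ∨ f x = f c)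
    (hR : ∀ x y, f x = f y → ¬ TransGen R x y) : ¬ HasDiCycle (Relation.Map R f f) := by
  -- A walk downstairs lifts to two `R`-paths joined by one jump inside a fibre of `f`: two
  -- successive nontrivial jumps both lie in the fibre of `c`, so they merge into one.
  have key : ∀ a b, TransGen (Relation.Map R f f) a b → ∃ x y, f x = a ∧ f y = b ∧
      ∃ p q, f p = f q ∧ ReflTransGen R x p ∧ TransGen R q y := by
    intro a b h
    induction h with
    | single h =>
      obtain ⟨x, y, hxy, rfl, rfl⟩ := h
      exact ⟨x, y, rfl, rfl, x, x, rfl, .refl, .single hxy⟩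
    | tail _ h ih =>
      obtain ⟨x', y', hxy', hx', rfl⟩ := h
      obtain ⟨x, y, rfl, hy, p, q, hpq, hxp, hqy⟩ := ih
      refine ⟨x, y', rfl, rfl, ?_⟩
      by_cases hyx' : y = x'
      · exact ⟨p, q, hpq, hxp, hqy.tail (hyx' ▸ hxy')⟩
      have hx'c : f x' = f c := by
        rw [hx', ← hy]
        exact (hf y x' (hy.trans hx'.symm)).resolve_left hyx'
      by_cases hpq' : p = q
      · subst hpq'
        exact ⟨y, x', hy.trans hx'.symm, (TransGen.trans_right hxp hqy).to_reflTransGen,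
          .single hxy'⟩
      · exact ⟨p, x', ((hf p q hpq).resolve_left hpq').trans hx'c.symm, hxp, .single hxy'⟩
  rintro ⟨a, ha⟩
  obtain ⟨x, y, hx, hy, p, q, hpq, hxp, hqy⟩ := key a a ha
  by_cases hpq' : p = q
  · subst hpq'
    exact hR x y (hx.trans hy.symm) (TransGen.trans_right hxp hqy)
  by_cases hxy : x = y
  · subst hxy
    exact hR q p hpq.symm (hqy.trans_left hxp)
  have hxc := (hf x y (hx.trans hy.symm)).resolve_left hxy
  have hqc := (hf q p hpq.symm).resolve_left (Ne.symm hpq')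
  exact hR q y (by rw [hqc, ← hxc, hx, hy]) hqy

namespace Multigraph

variable {ι W W' : Type*}

/-- `arcsOn` for the multigraph whose edge `i` has reference orientation `(ε i).1 → (ε i).2`. -/
def orientArcs (ε : ι → W × W) (s : Set ι) (d : ι → Bool) (a b : W) : Prop :=
  ∃ i, i ∈ s ∧ ((d i = false ∧ ε i = (a, b)) ∨ (d i = true ∧ ε i = (b, a)))

/-- Orientations of the edges in `s`, normalised to `false` off `s` so that each is counted once. -/
def acyclicOrientations (ε : ι → W × W) (s : Set ι) : Set (ι → Bool) :=
  {d | (∀ i ∉ s, d i = false) ∧ ¬ HasDiCycle (orientArcs ε s d)}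

theorem orientArcs_mono {ε : ι → W × W} {s t : Set ι} (hst : s ⊆ t) (d : ι → Bool) :
    orientArcs ε s d ≤ orientArcs ε t d :=
  fun _ _ ⟨i, hi, hd⟩ => ⟨i, hst hi, hd⟩

theorem orientArcs_congr {ε : ι → W × W} {s : Set ι} {d d' : ι → Bool} (h : Set.EqOn d d' s) :
    orientArcs ε s d = orientArcs ε s d' := by
  ext a b
  constructor <;> rintro ⟨i, hi, hd⟩ <;> exact ⟨i, hi, by simpa [h hi] using hd⟩

theorem orientArcs_map (ε : ι → W × W) (s : Set ι) (d : ι → Bool) (f : W → W') :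
    orientArcs (fun i => Prod.map f f (ε i)) s d = Relation.Map (orientArcs ε s d) f f := by
  ext a b
  constructor
  · rintro ⟨i, hi, ⟨hd, he⟩ | ⟨hd, he⟩⟩ <;> simp only [Prod.map, Prod.mk.injEq] at he
    · exact ⟨_, _, ⟨i, hi, .inl ⟨hd, rfl⟩⟩, he.1, he.2⟩
    · exact ⟨_, _, ⟨i, hi, .inr ⟨hd, rfl⟩⟩, he.2, he.1⟩
  · rintro ⟨x, y, ⟨i, hi, ⟨hd, he⟩ | ⟨hd, he⟩⟩, rfl, rfl⟩
    · exact ⟨i, hi, .inl ⟨hd, by simp [he]⟩⟩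
    · exact ⟨i, hi, .inr ⟨hd, by simp [he]⟩⟩

theorem acyclicOrientations_eq_empty_of_loop {ε : ι → W × W} {s : Set ι} {i : ι} (hi : i ∈ s)
    (hloop : (ε i).1 = (ε i).2) : acyclicOrientations ε s = ∅ := by
  refine Set.eq_empty_of_forall_notMem fun d ⟨_, hd⟩ => hd ⟨(ε i).1, .single ⟨i, hi, ?_⟩⟩
  cases d i <;> simp [Prod.ext_iff, hloop]

theorem update_mem_of_mem_acyclicOrientations_insert [DecidableEq ι] {ε : ι → W × W} {t : Set ι}
    {i₀ : ι} (hi₀ : i₀ ∉ t) {d : ι → Bool} (hd : d ∈ acyclicOrientations ε (insert i₀ t))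
    {a b : W} (hab : orientArcs ε {i₀} d a b) :
    Function.update d i₀ false ∈
      {d' ∈ acyclicOrientations ε t | ¬ TransGen (orientArcs ε t d') b a} := by
  obtain ⟨hsupp, hacyc⟩ := hd
  have hrestrict : orientArcs ε t (Function.update d i₀ false) = orientArcs ε t d :=
    orientArcs_congr fun i hi => Function.update_of_ne (ne_of_mem_of_not_mem hi hi₀) _ _
  have hsub := TransGen.mono (orientArcs_mono (ε := ε) (Set.subset_insert i₀ t) d)
  refine ⟨⟨fun i hi => ?_, ?_⟩, ?_⟩
  · rcases eq_or_ne i i₀ with rfl | hne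
    · exact Function.update_self ..
    · rw [Function.update_of_ne hne]
      exact hsupp i fun h => hi (h.resolve_left hne)
  · rw [hrestrict]
    exact fun ⟨x, hx⟩ => hacyc ⟨x, hsub _ _ hx⟩
  · rw [hrestrict]
    intro hba
    exact hacyc ⟨b, (hsub _ _ hba).tail (orientArcs_mono (by simp) d a b hab)⟩

variable [DecidableEq W]

def merge (u v x : W) : W := if x = u then v else x

theorem merge_eq_merge_iff {u v x y : W} :
    merge u v x = merge u v y ↔ x = y ∨ (x = u ∧ y = v) ∨ (x = v ∧ y = u) := by
  unfold merge
  split_ifs <;> grind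

def contract (ε : ι → W × W) (u v : W) : ι → W × W :=
  fun i => Prod.map (merge u v) (merge u v) (ε i)

theorem ncard_acyclicOrientations_insert_le [Finite ι] [DecidableEq ι] {t : Set ι} {i₀ : ι}
    (hi₀ : i₀ ∉ t) (ε : ι → W × W) :
    (acyclicOrientations ε (insert i₀ t)).ncard ≤
      (acyclicOrientations ε t).ncard +
        (acyclicOrientations (contract ε (ε i₀).1 (ε i₀).2) t).ncard := by
  set u := (ε i₀).1
  set v := (ε i₀).2
  set L := acyclicOrientations ε (insert i₀ t)
  -- `A a b`: orientations of `t` that stay acyclic when the arc `a → b` is added.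
  let A (a b : W) := {d' ∈ acyclicOrientations ε t | ¬ TransGen (orientArcs ε t d') b a}
  have hrestrict (x : Bool) (a b : W) (hab : ∀ d, d i₀ = x → orientArcs ε {i₀} d a b) :
      {d ∈ L | d i₀ = x}.ncard ≤ (A a b).ncard := by
    refine Set.ncard_le_ncard_of_injOn (Function.update · i₀ false)
      (fun d hd => update_mem_of_mem_acyclicOrientations_insert hi₀ hd.1 (hab d hd.2)) ?_
    intro d₁ hd₁ d₂ hd₂ h
    rw [← Function.update_eq_self i₀ d₁, ← Function.update_eq_self i₀ d₂, hd₁.2, hd₂.2,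
      ← Function.update_idem false x d₁, ← Function.update_idem false x d₂]
    exact congrArg (Function.update · i₀ x) h
  have hcontract : A u v ∩ A v u ⊆ acyclicOrientations (contract ε u v) t := by
    rintro d ⟨⟨⟨hsupp, hacyc⟩, hvu⟩, ⟨-, huv⟩⟩
    refine ⟨hsupp, ?_⟩
    unfold contract
    rw [orientArcs_map]
    refine not_hasDiCycle_map (c := u) (fun x y h => ?_) fun x y h hxy => ?_
    · rcases merge_eq_merge_iff.mp h with h | ⟨rfl, -⟩ | ⟨rfl, rfl⟩ <;> simp_all
    · rcases merge_eq_merge_iff.mp h with rfl | ⟨rfl, rfl⟩ | ⟨rfl, rfl⟩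
      exacts [hacyc ⟨x, hxy⟩, huv hxy, hvu hxy]
  calc L.ncard = {d ∈ L | d i₀ = false}.ncard + {d ∈ L | d i₀ = true}.ncard := by
        rw [← Set.ncard_union_eq]
        · congr 1
          ext d
          cases h : d i₀ <;> simp [h]
        · exact Set.disjoint_left.mpr fun d h₁ h₂ => by simp_all
    _ ≤ (A u v).ncard + (A v u).ncard :=
        add_le_add (hrestrict false u v fun d hd => ⟨i₀, rfl, .inl ⟨hd, rfl⟩⟩)
          (hrestrict true v u fun d hd => ⟨i₀, rfl, .inr ⟨hd, rfl⟩⟩)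
    _ = (A u v ∪ A v u).ncard + (A u v ∩ A v u).ncard :=
        (Set.ncard_union_add_ncard_inter _ _).symm
    _ ≤ _ := add_le_add (Set.ncard_le_ncard (Set.union_subset (fun d hd => hd.1) fun d hd => hd.1))
        (Set.ncard_le_ncard hcontract)

def endpoints (ε : ι → W × W) (Z : Finset ι) : Finset W :=
  Z.biUnion fun i => {(ε i).1, (ε i).2}

/-- Acyclicity in counting form: a cycle touches only as many vertices as it has edges, a loop
only one. -/
def IsForest (ε : ι → W × W) (X : Set ι) : Prop :=
  ∀ Z : Finset ι, ↑Z ⊆ X → Z.Nonempty → #Z < #(endpoints ε Z)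

def forests (ε : ι → W × W) (s : Set ι) : Set (Set ι) :=
  {X | X ⊆ s ∧ IsForest ε X}

theorem endpoints_contract (ε : ι → W × W) (u v : W) (Z : Finset ι) :
    endpoints (contract ε u v) Z = (endpoints ε Z).image (merge u v) := by
  simp [endpoints, contract, Finset.biUnion_image, Finset.image_insert]

theorem card_image_merge_add_one {S : Finset W} {u v : W} (hu : u ∈ S) (hv : v ∈ S) (huv : u ≠ v) :
    #(S.image (merge u v)) + 1 = #S := by
  have himage : S.image (merge u v) = (S.erase u).image (merge u v) := by
    refine le_antisymm (fun y hy => ?_) (Finset.image_subset_image (Finset.erase_subset u S))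
    obtain ⟨x, hx, rfl⟩ := Finset.mem_image.mp hy
    rcases eq_or_ne x u with rfl | hxu
    · exact Finset.mem_image.mpr ⟨v, Finset.mem_erase.mpr ⟨huv.symm, hv⟩, by simp [merge, huv.symm]⟩
    · exact Finset.mem_image_of_mem _ (Finset.mem_erase.mpr ⟨hxu, hx⟩)
  have hinj : Set.InjOn (merge u v) (S.erase u) := fun x hx y hy h => by
    simpa [merge, (Finset.mem_erase.mp hx).1, (Finset.mem_erase.mp hy).1] using h
  rw [himage, Finset.card_image_of_injOn hinj, Finset.card_erase_add_one hu]

theorem IsForest.insert_of_contract [DecidableEq ι] {ε : ι → W × W} {i₀ : ι}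
    (hloop : (ε i₀).1 ≠ (ε i₀).2) {X : Set ι} (hX : IsForest (contract ε (ε i₀).1 (ε i₀).2) X) : IsForest ε (insert i₀ X) := by
  intro Z hZX hZ
  have hmono : #((endpoints ε Z).image (merge (ε i₀).1 (ε i₀).2)) ≤ #(endpoints ε Z) :=
    Finset.card_image_le
  by_cases hi₀ : i₀ ∈ Z
  · have hu : (ε i₀).1 ∈ endpoints ε Z := Finset.mem_biUnion.mpr ⟨i₀, hi₀, by simp⟩
    have hv : (ε i₀).2 ∈ endpoints ε Z := Finset.mem_biUnion.mpr ⟨i₀, hi₀, by simp⟩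
    have hcard := card_image_merge_add_one hu hv hloop
    have hrest : #(Z.erase i₀) < #((endpoints ε Z).image (merge (ε i₀).1 (ε i₀).2)) := by
      rcases (Z.erase i₀).eq_empty_or_nonempty with h | h
      · simpa [h] using ⟨(ε i₀).1, hu⟩
      have hsub : ↑(Z.erase i₀) ⊆ X := fun i hi => by
        simpa [(Finset.mem_erase.mp hi).1] using hZX (Finset.mem_of_mem_erase hi)
      refine (hX _ hsub h).trans_le (Finset.card_le_card ?_)
      rw [endpoints_contract]
      exact Finset.image_subset_image (Finset.biUnion_subset_biUnion_of_subset_left _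
        (Finset.erase_subset i₀ Z))
    have := Finset.card_erase_add_one hi₀
    omega
  · have hsub : ↑Z ⊆ X := fun i hi => (hZX hi).resolve_left (ne_of_mem_of_not_mem hi hi₀)
    have := hX Z hsub hZ
    rw [endpoints_contract] at this
    omega

theorem ncard_forests_add_le_ncard_forests_insert [Finite ι] [DecidableEq ι] {t : Set ι} {i₀ : ι}
    (hi₀ : i₀ ∉ t) {ε : ι → W × W} (hloop : (ε i₀).1 ≠ (ε i₀).2) :
    (forests ε t).ncard + (forests (contract ε (ε i₀).1 (ε i₀).2) t).ncard ≤
      (forests ε (insert i₀ t)).ncard := by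
  have hinj : Set.InjOn (insert i₀) (forests (contract ε (ε i₀).1 (ε i₀).2) t) :=
    fun X hX Y hY h => by
      rw [← Set.insert_sdiff_self_of_notMem fun h => hi₀ (hX.1 h),
        ← Set.insert_sdiff_self_of_notMem fun h => hi₀ (hY.1 h), h]
  have hdisj : Disjoint (forests ε t) (insert i₀ '' forests (contract ε (ε i₀).1 (ε i₀).2) t) :=
    Set.disjoint_left.mpr fun X hX ⟨Y, _, hY⟩ => hi₀ (hX.1 (hY ▸ Set.mem_insert i₀ Y))
  rw [← hinj.ncard_image, ← Set.ncard_union_eq hdisj]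
  refine Set.ncard_le_ncard
    (Set.union_subset (fun X hX => ⟨hX.1.trans (Set.subset_insert _ _), hX.2⟩) ?_)
  rintro _ ⟨Y, hY, rfl⟩
  exact ⟨Set.insert_subset_insert hY.1, hY.2.insert_of_contract hloop⟩

theorem ncard_acyclicOrientations_le_ncard_forests [Finite ι] [DecidableEq ι] (s : Finset ι)
    (ε : ι → W × W) : (acyclicOrientations ε s).ncard ≤ (forests ε s).ncard := by
  induction s using Finset.induction_on generalizing ε with
  | empty =>
    have hsingle : acyclicOrientations ε (∅ : Finset ι) ⊆ {fun _ => false} :=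
      fun d hd => funext fun i => hd.1 i (by simp)
    have hempty : (∅ : Set ι) ∈ forests ε (∅ : Finset ι) :=
      ⟨Set.empty_subset _, fun Z hZ ⟨i, hi⟩ => by simpa using hZ hi⟩
    calc _ ≤ 1 := (Set.ncard_le_ncard hsingle).trans (Set.ncard_singleton _).le
      _ ≤ _ := (Set.ncard_pos (Set.toFinite _)).mpr ⟨_, hempty⟩
  | insert i₀ t hi₀ ih =>
    rw [Finset.coe_insert]
    have hi₀' : i₀ ∉ (t : Set ι) := hi₀
    by_cases hloop : (ε i₀).1 = (ε i₀).2
    · simp [acyclicOrientations_eq_empty_of_loop (Set.mem_insert i₀ _) hloop]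
    calc _ ≤ _ := ncard_acyclicOrientations_insert_le hi₀' ε
      _ ≤ _ := add_le_add (ih ε) (ih _)
      _ ≤ _ := ncard_forests_add_le_ncard_forests_insert hi₀' hloop

end Multigraph

theorem SimpleGraph.Walk.IsCycle.mem_tail_support_of_mem_edges {V : Type*} {G : SimpleGraph V}
    {w x : V} {c : G.Walk w w} (hc : c.IsCycle) {e : Sym2 V} (he : e ∈ c.edges) (hx : x ∈ e) :
    x ∈ c.support.tail := by
  obtain ⟨y, rfl⟩ := Sym2.mem_iff_exists.mp hx
  have hsupp := c.fst_mem_support_of_mem_edges he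
  rw [← c.cons_tail_support, List.mem_cons] at hsupp
  exact hsupp.elim (fun h => h ▸ c.end_mem_tail_support hc.not_nil) id

theorem isAcyclic_subgraphOf_of_isForest {V : Type*} [DecidableEq V] {G : SimpleGraph V}
    {ρ : Sym2 V → V × V} (hρ : ∀ e ∈ G.edgeSet, Sym2.mk (ρ e).1 (ρ e).2 = e)
    {X : Set G.edgeSet} (hX : Multigraph.IsForest (fun e : G.edgeSet => ρ e) X) :
    (subgraphOf G X).IsAcyclic := by
  classical
  intro w c hc
  let Z : Finset G.edgeSet := c.edges.toFinset.subtype (· ∈ G.edgeSet)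
  have hedges : ∀ e ∈ c.edges, ∃ x ∈ X, x.val = e := fun e he => by
    have h := c.edges_subset_edgeSet he
    rw [subgraphOf, SimpleGraph.edgeSet_fromEdgeSet] at h
    simpa using h.1
  have hZX : ↑Z ⊆ X := fun e he => by
    obtain ⟨x, hx, hxe⟩ := hedges e (by simpa [Z] using he)
    rwa [← Subtype.ext hxe]
  have hcardZ : #Z = c.length := by
    rw [Finset.card_subtype, Finset.filter_true_of_mem, List.toFinset_card_of_nodup hc.edges_nodup,
      c.length_edges]
    intro e he
    obtain ⟨x, -, rfl⟩ := hedges e (List.mem_toFinset.mp he)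
    exact x.2
  have hends : Multigraph.endpoints (fun e : G.edgeSet => ρ e) Z ⊆ c.support.tail.toFinset := by
    intro x hx
    obtain ⟨e, he, hxe⟩ := Finset.mem_biUnion.mp hx
    have hxe : x ∈ e.val := by
      rw [← hρ e e.2]
      rcases Finset.mem_insert.mp hxe with rfl | hxe
      · exact Sym2.mem_mk_left _ _
      · exact Finset.mem_singleton.mp hxe ▸ Sym2.mem_mk_right _ _
    exact List.mem_toFinset.mpr (hc.mem_tail_support_of_mem_edges (by simpa [Z] using he) hxe)
  have hlt := hX Z hZX (Finset.card_pos.mp (hcardZ ▸ by have := hc.three_le_length; omega))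
  have hle := Finset.card_le_card hends
  rw [List.toFinset_card_of_nodup hc.support_nodup, List.length_tail, c.length_support] at hle
  omega

theorem ncard_compl_le_ncard_compl {α β : Type*} [Finite α] [Finite β]
    (h : Nat.card α = Nat.card β) {s : Set α} {t : Set β} (hst : s.ncard ≤ t.ncard) :
    tᶜ.ncard ≤ sᶜ.ncard := by
  have := Set.ncard_add_ncard_compl s
  have := Set.ncard_add_ncard_compl t
  omega

/-- (i) the number of orientations of `G` containing a directed cycle is
at least the number of edge subsets `X` such that `G_X` contains a cycle; (ii) the number
of acyclic orientations is at most the number of edge subsets `X` such that `G_X` is a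
forest. -/
theorem cyclic_orientations_vs_subgraphs {V : Type*} [Fintype V] (G : SimpleGraph V)
    (ρ : Sym2 V → V × V) (hρ : ∀ e ∈ G.edgeSet, Sym2.mk (ρ e).1 (ρ e).2 = e) :
    {X : Set G.edgeSet | ¬ (subgraphOf G X).IsAcyclic}.ncard ≤
      {d : G.edgeSet → Bool | HasDiCycle (arcs G ρ d)}.ncard ∧
    {d : G.edgeSet → Bool | ¬ HasDiCycle (arcs G ρ d)}.ncard ≤
      {X : Set G.edgeSet | (subgraphOf G X).IsAcyclic}.ncard := by
  classical
  have hacyclic : {d : G.edgeSet → Bool | ¬ HasDiCycle (arcs G ρ d)} =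
      Multigraph.acyclicOrientations (fun e : G.edgeSet => ρ e) (univ : Finset G.edgeSet) := by
    rw [Finset.coe_univ]
    ext d
    exact (and_iff_right fun i hi => absurd (Set.mem_univ i) hi).symm
  have hii : {d : G.edgeSet → Bool | ¬ HasDiCycle (arcs G ρ d)}.ncard ≤
      {X : Set G.edgeSet | (subgraphOf G X).IsAcyclic}.ncard := by
    rw [hacyclic]
    exact (Multigraph.ncard_acyclicOrientations_le_ncard_forests _ _).trans
      (Set.ncard_le_ncard fun X hX => isAcyclic_subgraphOf_of_isForest hρ hX.2)
  refine ⟨?_, hii⟩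
  have hcard : Nat.card (G.edgeSet → Bool) = Nat.card (Set G.edgeSet) :=
    Nat.card_congr (Equiv.arrowCongr (.refl _) Equiv.propEquivBool).symm
  simpa only [Set.compl_ofPred, not_not] using ncard_compl_le_ncard_compl hcard hii
end

section
/- Let G be a finite simple undirected graph with edge set E, and let 𝕊_cyc be the system of all orientations d of G such that G⃗^d contains a directed cycle. Then: (i) sstr(𝕊_cyc) = {X ⊆ E : G_{E−X} contains a cycle}; (ii) str(¬𝕊_cyc) = {X ⊆ E : G_X is a forest}. -/
/-!
An orientation of a forest has no directed cycle: a directed walk in it can be shortened to a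
directed path, and a directed path that returns to one of its own vertices would yield two
distinct paths between two adjacent vertices. So if `G_X` is a forest, any orientation `f` of `X`
extends to an acyclic orientation of `G`: extend the reachability order of `f` to a linear order
(Szpilrajn) and orient every edge outside `X` upwards. If instead `G_X` contains a cycle, orienting
that cycle cyclically produces a directed cycle however the other edges are oriented. Both parts
of the theorem follow from these two facts (for (i) applied to `E − X`).
-/

open SimpleGraph Relation

section Relation

variable {α : Type*} {R : α → α → Prop}

theorem HasDiCycle.mono {R' : α → α → Prop} (h : ∀ a b, R a b → R' a b) :
    HasDiCycle R → HasDiCycle R' :=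
  fun ⟨a, ha⟩ => ⟨a, TransGen.mono h a a ha⟩

theorem isPartialOrder_reflTransGen (hR : ¬ HasDiCycle R) :
    IsPartialOrder α (ReflTransGen R) where
  refl _ := .refl
  trans _ _ _ := ReflTransGen.trans
  antisymm a b hab hba := by
    rcases reflTransGen_iff_eq_or_transGen.1 hab with rfl | hab
    · rfl
    rcases reflTransGen_iff_eq_or_transGen.1 hba with rfl | hba
    · rfl
    exact (hR ⟨b, hba.trans hab⟩).elim

theorem not_hasDiCycle_of_forall_lt {s : α → α → Prop} [IsPartialOrder α s]
    (hs : ∀ a b, R a b → s a b ∧ a ≠ b) : ¬ HasDiCycle R := by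
  suffices ∀ a b, TransGen R a b → s a b ∧ a ≠ b from fun ⟨a, ha⟩ => (this a a ha).2 rfl
  intro a b hab
  induction hab with
  | single hab => exact hs _ _ hab
  | tail _ hbc ih =>
    obtain ⟨hsbc, -⟩ := hs _ _ hbc
    refine ⟨_root_.trans ih.1 hsbc, ?_⟩
    rintro rfl
    exact ih.2 (antisymm ih.1 hsbc)

end Relation

namespace SimpleGraph

variable {V : Type*} {H : SimpleGraph V} {R : V → V → Prop}

theorem Walk.reflTransGen_of_forall_darts {a b : V} (p : H.Walk a b)
    (hp : ∀ d ∈ p.darts, R d.fst d.snd) : ReflTransGen R a b := by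
  induction p with
  | nil => exact .refl
  | cons h q ih =>
    exact .head (hp _ List.mem_cons_self) (ih fun d hd => hp d (List.mem_cons_of_mem _ hd))

theorem Walk.transGen_of_forall_darts {a b : V} (p : H.Walk a b) (hne : ¬ p.Nil)
    (hp : ∀ d ∈ p.darts, R d.fst d.snd) : TransGen R a b := by
  cases p with
  | nil => exact absurd Walk.Nil.nil hne
  | cons h q =>
    exact .head' (hp _ List.mem_cons_self)
      (q.reflTransGen_of_forall_darts fun d hd => hp d (List.mem_cons_of_mem _ hd))

theorem Walk.IsTrail.symm_notMem_darts {a b : V} {p : H.Walk a b} (hp : p.IsTrail)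
    {d : H.Dart} (hd : d ∈ p.darts) : d.symm ∉ p.darts := by
  intro hd'
  have : d = d.symm := List.inj_on_of_nodup_map hp.edges_nodup hd hd' (by simp)
  exact d.fst_ne_snd (congrArg (·.fst) this)

/-- Otherwise the part of `p` from `c` to `b` and the edge `cb` are two paths from `c` to `b`, so
`p` would traverse the arc `b → c` backwards. -/
theorem IsAcyclic.notMem_support_of_forall_darts (hH : H.IsAcyclic)
    (hasymm : ∀ a b, R a b → ¬ R b a) {a b c : V} {p : H.Walk a b} (hp : p.IsPath)
    (hpR : ∀ d ∈ p.darts, R d.fst d.snd) (hbc : H.Adj b c) (hR : R b c) : c ∉ p.support := by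
  classical
  intro hc
  have hdrop : p.dropUntil c hc = Walk.cons hbc.symm .nil :=
    congrArg Subtype.val ((hH.subsingleton_path c b).elim ⟨_, hp.dropUntil hc⟩
      (Path.singleton hbc.symm))
  have hcb : ⟨(c, b), hbc.symm⟩ ∈ p.darts :=
    p.darts_dropUntil_subset_darts hc (by rw [hdrop]; simp)
  exact hasymm _ _ hR (hpR _ hcb)

theorem IsAcyclic.exists_isPath_of_transGen (hH : H.IsAcyclic) (hadj : ∀ a b, R a b → H.Adj a b)
    (hasymm : ∀ a b, R a b → ¬ R b a) {a b : V} (hab : TransGen R a b) :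
    ∃ p : H.Walk a b, p.IsPath ∧ ∀ d ∈ p.darts, R d.fst d.snd := by
  induction hab with
  | single hab => exact ⟨.cons (hadj _ _ hab) .nil, by simp [(hadj _ _ hab).ne], by simpa⟩
  | tail _ hbc ih =>
    obtain ⟨p, hp, hpR⟩ := ih
    have hc := hH.notMem_support_of_forall_darts hasymm hp hpR (hadj _ _ hbc) hbc
    refine ⟨p.concat (hadj _ _ hbc), hp.concat hc _, fun d hd => ?_⟩
    rw [Walk.darts_concat, List.concat_eq_append, List.mem_append, List.mem_singleton] at hd
    rcases hd with hd | rfl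
    exacts [hpR d hd, hbc]

theorem IsAcyclic.not_hasDiCycle (hH : H.IsAcyclic) (hadj : ∀ a b, R a b → H.Adj a b)
    (hasymm : ∀ a b, R a b → ¬ R b a) : ¬ HasDiCycle R := by
  rintro ⟨a, ha⟩
  obtain ⟨b, hab, hba⟩ := TransGen.tail'_iff.1 ha
  rcases reflTransGen_iff_eq_or_transGen.1 hab with rfl | hab
  · exact hasymm _ _ hba hba
  obtain ⟨p, hp, hpR⟩ := hH.exists_isPath_of_transGen hadj hasymm hab
  exact hH.notMem_support_of_forall_darts hasymm hp hpR (hadj _ _ hba) hba p.start_mem_support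

end SimpleGraph

section Orientation

variable {V : Type*} {G : SimpleGraph V} {ρ : Sym2 V → V × V} {X : Set G.edgeSet}
  {d : G.edgeSet → Bool} {u w : V}

theorem arcsOn_iff : arcsOn G ρ X d u w ↔ ∃ e ∈ X, ρ e = cond (d e) (w, u) (u, w) := by
  refine exists_congr fun e => and_congr_right fun _ => ?_
  cases d e <;> simp

theorem val_eq_of_rho_eq (hρ : ∀ e ∈ G.edgeSet, Sym2.mk (ρ e).1 (ρ e).2 = e) {e : G.edgeSet}
    {b : Bool} (he : ρ e = cond b (w, u) (u, w)) : (e : Sym2 V) = s(u, w) := by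
  rw [← hρ e e.2, he]
  cases b <;> simp [Sym2.eq_swap]

theorem arcsOn_adj (hρ : ∀ e ∈ G.edgeSet, Sym2.mk (ρ e).1 (ρ e).2 = e)
    (h : arcsOn G ρ X d u w) : (subgraphOf G X).Adj u w := by
  obtain ⟨e, heX, he⟩ := arcsOn_iff.1 h
  have he := val_eq_of_rho_eq hρ he
  exact (fromEdgeSet_adj _).2 ⟨⟨e, heX, he⟩, G.ne_of_adj (he ▸ e.2 : s(u, w) ∈ G.edgeSet)⟩

theorem arcsOn_asymm (hρ : ∀ e ∈ G.edgeSet, Sym2.mk (ρ e).1 (ρ e).2 = e)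
    (huw : arcsOn G ρ X d u w) (hwu : arcsOn G ρ X d w u) : False := by
  have hne := (arcsOn_adj hρ huw).ne
  obtain ⟨e, -, he⟩ := arcsOn_iff.1 huw
  obtain ⟨e', -, he'⟩ := arcsOn_iff.1 hwu
  obtain rfl : e = e' :=
    Subtype.ext <| (val_eq_of_rho_eq hρ he).trans <|
      Sym2.eq_swap.trans (val_eq_of_rho_eq hρ he').symm
  rw [he] at he'
  cases hde : d e <;> simp [hde, hne, Ne.symm hne] at he'

theorem not_hasDiCycle_arcsOn_of_isAcyclic
    (hρ : ∀ e ∈ G.edgeSet, Sym2.mk (ρ e).1 (ρ e).2 = e) (hX : (subgraphOf G X).IsAcyclic)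
    (d : G.edgeSet → Bool) : ¬ HasDiCycle (arcsOn G ρ X d) :=
  hX.not_hasDiCycle (fun _ _ => arcsOn_adj hρ) (fun _ _ => arcsOn_asymm hρ)

theorem exists_eqOn_not_hasDiCycle_arcs_of_arcsOn
    (hρ : ∀ e ∈ G.edgeSet, Sym2.mk (ρ e).1 (ρ e).2 = e) (f : G.edgeSet → Bool)
    (hf : ¬ HasDiCycle (arcsOn G ρ X f)) :
    ∃ d, Set.EqOn d f X ∧ ¬ HasDiCycle (arcs G ρ d) := by
  classical
  have := isPartialOrder_reflTransGen hf
  obtain ⟨s, hs, hfs⟩ := extend_partialOrder (ReflTransGen (arcsOn G ρ X f))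
  refine ⟨X.piecewise f fun e => !decide (s (ρ e).1 (ρ e).2), Set.piecewise_eqOn _ _ _, ?_⟩
  refine not_hasDiCycle_of_forall_lt (s := s) fun u w huw => ⟨?_, (arcsOn_adj hρ huw).ne⟩
  obtain ⟨e, -, he⟩ := arcsOn_iff.1 huw
  by_cases heX : e ∈ X
  · rw [Set.piecewise_eq_of_mem _ _ _ heX] at he
    exact hfs _ _ (.single (arcsOn_iff.2 ⟨e, heX, he⟩))
  · rw [Set.piecewise_eq_of_notMem _ _ _ heX] at he
    by_cases hse : s (ρ e).1 (ρ e).2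
    · simp only [hse, decide_true, Bool.not_true, cond_false] at he
      simpa [he] using hse
    · simp only [hse, decide_false, Bool.not_false, cond_true] at he
      rw [he] at hse
      exact (total_of s u w).resolve_right hse

theorem exists_eqOn_not_hasDiCycle_arcs
    (hρ : ∀ e ∈ G.edgeSet, Sym2.mk (ρ e).1 (ρ e).2 = e) (hX : (subgraphOf G X).IsAcyclic)
    (f : G.edgeSet → Bool) :
    ∃ d, Set.EqOn d f X ∧ ¬ HasDiCycle (arcs G ρ d) :=
  exists_eqOn_not_hasDiCycle_arcs_of_arcsOn hρ f (not_hasDiCycle_arcsOn_of_isAcyclic hρ hX f)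

theorem exists_hasDiCycle_arcsOn_of_not_isAcyclic
    (hρ : ∀ e ∈ G.edgeSet, Sym2.mk (ρ e).1 (ρ e).2 = e) (hX : ¬ (subgraphOf G X).IsAcyclic) :
    ∃ f, HasDiCycle (arcsOn G ρ X f) := by
  classical
  obtain ⟨v, c, hc⟩ : ∃ v, ∃ c : (subgraphOf G X).Walk v v, c.IsCycle := by
    simpa [IsAcyclic] using hX
  refine ⟨fun e => decide (∃ d ∈ c.darts, d.toProd = (ρ e).swap), v,
    c.transGen_of_forall_darts hc.not_nil fun d hd => ?_⟩
  obtain ⟨⟨e, heX, he⟩, -⟩ := (fromEdgeSet_adj _).1 d.adj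
  refine arcsOn_iff.2 ⟨e, heX, ?_⟩
  rcases Sym2.mk_eq_mk_iff.1 ((hρ e e.2).trans he) with hρe | hρe
  · have : ¬ ∃ d' ∈ c.darts, d'.toProd = (ρ e).swap := by
      rintro ⟨d', hd', hd'e⟩
      refine hc.isTrail.symm_notMem_darts hd ?_
      convert hd'
      ext <;> simp [hd'e, hρe]
    simpa [this] using hρe
  · have : ∃ d' ∈ c.darts, d'.toProd = (ρ e).swap := ⟨d, hd, by simp [hρe]⟩
    simp only [this, decide_true, cond_true]
    exact hρe

theorem exists_forall_eqOn_hasDiCycle_arcs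
    (hρ : ∀ e ∈ G.edgeSet, Sym2.mk (ρ e).1 (ρ e).2 = e) (hX : ¬ (subgraphOf G X).IsAcyclic) :
    ∃ f, ∀ d, Set.EqOn d f X → HasDiCycle (arcs G ρ d) := by
  obtain ⟨f, hf⟩ := exists_hasDiCycle_arcsOn_of_not_isAcyclic hρ hX
  refine ⟨f, fun d hdf => hf.mono fun u w ⟨e, heX, he⟩ => ⟨e, Set.mem_univ e, ?_⟩⟩
  rwa [hdf heX]

end Orientation

theorem sstr_str_cyclic_general {V : Type*} (G : SimpleGraph V)
    (ρ : Sym2 V → V × V) (hρ : ∀ e ∈ G.edgeSet, Sym2.mk (ρ e).1 (ρ e).2 = e) :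
    sstr {d : G.edgeSet → Bool | HasDiCycle (arcs G ρ d)} =
      {X : Set G.edgeSet | ¬ (subgraphOf G Xᶜ).IsAcyclic} ∧
    str ({d : G.edgeSet → Bool | HasDiCycle (arcs G ρ d)}ᶜ) =
      {X : Set G.edgeSet | (subgraphOf G X).IsAcyclic} := by
  refine ⟨Set.ext fun X => ⟨?_, ?_⟩, Set.ext fun X => ⟨?_, ?_⟩⟩
  · rintro ⟨g, hg⟩ hXc
    obtain ⟨d, hdg, hd⟩ := exists_eqOn_not_hasDiCycle_arcs hρ hXc g
    obtain ⟨h, hh, hhd, hhg⟩ := hg d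
    have hhd' : h = d :=
      (Set.eqOn_univ _ _).1 (Set.union_compl_self X ▸ hhd.union (hhg.trans hdg.symm))
    exact hd (hhd' ▸ hh)
  · intro hXc
    obtain ⟨g, hg⟩ := exists_forall_eqOn_hasDiCycle_arcs hρ hXc
    classical
    exact ⟨g, fun f => ⟨X.piecewise f g, hg _ (Set.piecewise_eqOn_compl _ _ _),
      Set.piecewise_eqOn _ _ _, Set.piecewise_eqOn_compl _ _ _⟩⟩
  · intro hX
    by_contra hX'
    obtain ⟨f, hf⟩ := exists_forall_eqOn_hasDiCycle_arcs hρ hX'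
    obtain ⟨h, hh, hhf⟩ := hX f
    exact hh (hf h hhf)
  · intro hX f
    obtain ⟨d, hdf, hd⟩ := exists_eqOn_not_hasDiCycle_arcs hρ hX f
    exact ⟨d, hd, hdf⟩

/-- for the system `𝕊_cyc` of orientations containing a directed cycle,
(i) `sstr(𝕊_cyc) = {X ⊆ E : G_{E−X} has a cycle}` and
(ii) `str(¬𝕊_cyc) = {X ⊆ E : G_X is a forest}`. -/
theorem sstr_str_cyclic {V : Type*} [Fintype V] (G : SimpleGraph V)
    (ρ : Sym2 V → V × V) (hρ : ∀ e ∈ G.edgeSet, Sym2.mk (ρ e).1 (ρ e).2 = e) :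
    sstr {d : G.edgeSet → Bool | HasDiCycle (arcs G ρ d)} =
      {X : Set G.edgeSet | ¬ (subgraphOf G Xᶜ).IsAcyclic} ∧
    str ({d : G.edgeSet → Bool | HasDiCycle (arcs G ρ d)}ᶜ) =
      {X : Set G.edgeSet | (subgraphOf G X).IsAcyclic} :=
  sstr_str_cyclic_general G ρ hρ
end

section
/- Let G be a finite simple undirected graph with edge set E, and let ¬𝕊_cyc be the system of all acyclic orientations of G. Then every X ⊆ E all of whose edges are bridges of G satisfies X ∈ sstr(¬𝕊_cyc); equivalently, every X ∈ str(𝕊_cyc) satisfies that E−X intersects some cycle of G, where 𝕊_cyc is the system of orientations containing a directed cycle. -/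
/-!
Orient every edge that is not a bridge towards its endpoint of larger rank, for an injective rank
of the vertices. However the bridges are oriented, no directed cycle appears: an arc along a
bridge `e` enters the side of `G - e` containing its head, which no other arc leaves, and every
other arc raises the rank. So the pair (set of bridges on whose head side `v` lies, rank of `v`)
increases strictly, in the lexicographic order, along every arc. The second assertion is the
first one for `E - X` under the duality `Y ∈ sstr 𝕊ᶜ ↔ E - Y ∉ str 𝕊`.
-/

open SimpleGraph

theorem mem_sstr_compl_iff {α : Type*} {S : Set (α → Bool)} {Y : Set α} :
    Y ∈ sstr Sᶜ ↔ Yᶜ ∉ str S := by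
  classical
  constructor
  · rintro ⟨g, hg⟩ hY
    obtain ⟨h, hS, hhg⟩ := hY g
    obtain ⟨h', hS', hh'Y, hh'g⟩ := hg h
    have : h' = h := funext fun x => by
      by_cases hx : x ∈ Y
      · exact hh'Y hx
      · exact (hh'g hx).trans (hhg hx).symm
    exact hS' (this ▸ hS)
  · intro hY
    obtain ⟨g, hg⟩ : ∃ g : α → Bool, ∀ h ∈ S, ¬Set.EqOn h g Yᶜ := by
      simpa [str, Shatters] using hY
    exact ⟨g, fun f => ⟨Y.piecewise f g, fun hS => hg _ hS (Y.piecewise_eqOn_compl f g),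
      Y.piecewise_eqOn f g, Y.piecewise_eqOn_compl f g⟩⟩

theorem not_hasDiCycle_of_lt {V β : Type*} [Preorder β] {R : V → V → Prop} (Φ : V → β)
    (hΦ : ∀ u v, R u v → Φ u < Φ v) : ¬HasDiCycle R := by
  rintro ⟨v, hv⟩
  have := hv.lift Φ hΦ
  rw [Relation.transGen_eq_self] at this
  exact lt_irrefl _ this

section Orientation

variable {V : Type*} {G : SimpleGraph V} {ρ : Sym2 V → V × V}

def arcOf (ρ : Sym2 V → V × V) (d : G.edgeSet → Bool) (e : G.edgeSet) : V × V :=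
  if d e then (ρ e).swap else ρ e

theorem arcs_iff {d : G.edgeSet → Bool} {u v : V} :
    arcs G ρ d u v ↔ ∃ e, arcOf ρ d e = (u, v) := by
  simp only [arcs, arcsOn, arcOf, Set.mem_univ, true_and]
  refine exists_congr fun e => ?_
  cases d e <;> simp [Prod.swap_eq_iff_eq_swap]

theorem mk_arcOf (hρ : ∀ e ∈ G.edgeSet, Sym2.mk (ρ e).1 (ρ e).2 = e) (d : G.edgeSet → Bool)
    (e : G.edgeSet) : Sym2.mk (arcOf ρ d e).1 (arcOf ρ d e).2 = e := by
  unfold arcOf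
  cases d e
  · exact hρ e e.2
  · simpa [Sym2.eq_swap] using hρ e e.2

theorem adj_arcOf (hρ : ∀ e ∈ G.edgeSet, Sym2.mk (ρ e).1 (ρ e).2 = e) (d : G.edgeSet → Bool)
    (e : G.edgeSet) : G.Adj (arcOf ρ d e).1 (arcOf ρ d e).2 := by
  rw [← mem_edgeSet, mk_arcOf hρ]
  exact e.2

def headSide (ρ : Sym2 V → V × V) (d : G.edgeSet → Bool) (e : G.edgeSet) : Set V :=
  {x | (G.deleteEdges {e.val}).Reachable (arcOf ρ d e).2 x}

theorem head_mem_headSide (d : G.edgeSet → Bool) (e : G.edgeSet) :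
    (arcOf ρ d e).2 ∈ headSide ρ d e :=
  Reachable.refl _

theorem tail_notMem_headSide (hρ : ∀ e ∈ G.edgeSet, Sym2.mk (ρ e).1 (ρ e).2 = e)
    (d : G.edgeSet → Bool) {e : G.edgeSet} (he : G.IsBridge e) :
    (arcOf ρ d e).1 ∉ headSide ρ d e := by
  have hb : G.IsBridge s((arcOf ρ d e).1, (arcOf ρ d e).2) := (mk_arcOf hρ d e).symm ▸ he
  rw [isBridge_iff, mk_arcOf hρ] at hb
  exact fun h => hb h.symm

theorem mem_headSide_iff_of_ne (hρ : ∀ e ∈ G.edgeSet, Sym2.mk (ρ e).1 (ρ e).2 = e)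
    (d : G.edgeSet → Bool) {e e' : G.edgeSet} (hne : e' ≠ e) :
    (arcOf ρ d e').1 ∈ headSide ρ d e ↔ (arcOf ρ d e').2 ∈ headSide ρ d e := by
  have hadj : (G.deleteEdges {e.val}).Adj (arcOf ρ d e').1 (arcOf ρ d e').2 := by
    rw [deleteEdges_adj, mk_arcOf hρ, Set.mem_singleton_iff, ← Subtype.ext_iff]
    exact ⟨adj_arcOf hρ d e', hne⟩
  exact ⟨fun h => h.trans hadj.reachable, fun h => h.trans hadj.reachable.symm⟩

variable {α : Type*} [Preorder α]

/-- Crossing a bridge of `B` enlarges the first component; every other arc keeps it. -/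
def bridgePotential (ρ : Sym2 V → V × V) (r : V → α) (B : Set G.edgeSet)
    (d : G.edgeSet → Bool) (v : V) : Set G.edgeSet ×ₗ α :=
  toLex ({e ∈ B | v ∈ headSide ρ d e}, r v)

theorem bridgePotential_lt (hρ : ∀ e ∈ G.edgeSet, Sym2.mk (ρ e).1 (ρ e).2 = e) (r : V → α)
    {B : Set G.edgeSet} (hB : ∀ e ∈ B, G.IsBridge e) {d : G.edgeSet → Bool}
    (hd : ∀ e ∉ B, r (arcOf ρ d e).1 < r (arcOf ρ d e).2) (e : G.edgeSet) :
    bridgePotential ρ r B d (arcOf ρ d e).1 < bridgePotential ρ r B d (arcOf ρ d e).2 := by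
  have hother : ∀ e' ∈ B, e' ≠ e →
      ((arcOf ρ d e).1 ∈ headSide ρ d e' ↔ (arcOf ρ d e).2 ∈ headSide ρ d e') :=
    fun e' _ hne => mem_headSide_iff_of_ne hρ d (Ne.symm hne)
  rw [bridgePotential, bridgePotential, Prod.Lex.toLex_lt_toLex]
  by_cases heB : e ∈ B
  · refine Or.inl ((Set.ssubset_iff_of_subset ?_).2
      ⟨e, ⟨heB, head_mem_headSide d e⟩, fun h => tail_notMem_headSide hρ d (hB e heB) h.2⟩)
    rintro e' ⟨he'B, he'⟩
    refine ⟨he'B, ?_⟩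
    rcases eq_or_ne e' e with rfl | hne
    · exact head_mem_headSide d e'
    · exact (hother e' he'B hne).1 he'
  · refine Or.inr ⟨Set.ext fun e' => ?_, hd e heB⟩
    simp only [Set.mem_ofPred_eq]
    refine and_congr_right fun he'B => hother e' he'B ?_
    rintro rfl
    exact heB he'B

theorem not_hasDiCycle_arcs_of_isBridge (hρ : ∀ e ∈ G.edgeSet, Sym2.mk (ρ e).1 (ρ e).2 = e)
    (r : V → α) {B : Set G.edgeSet} (hB : ∀ e ∈ B, G.IsBridge e) {d : G.edgeSet → Bool}
    (hd : ∀ e ∉ B, r (arcOf ρ d e).1 < r (arcOf ρ d e).2) : ¬HasDiCycle (arcs G ρ d) := by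
  refine not_hasDiCycle_of_lt (bridgePotential ρ r B d) fun u v huv => ?_
  obtain ⟨e, he⟩ := arcs_iff.1 huv
  simpa [he] using bridgePotential_lt hρ r hB hd e

end Orientation

section Upward

variable {V α : Type*} [LinearOrder α] {G : SimpleGraph V} {ρ : Sym2 V → V × V}

def upward (r : V → α) (ρ : Sym2 V → V × V) : G.edgeSet → Bool :=
  fun e => decide (r (ρ e).2 < r (ρ e).1)

theorem lt_arcOf_of_eq_upward {r : V → α} (hr : Function.Injective r)
    (hρ : ∀ e ∈ G.edgeSet, Sym2.mk (ρ e).1 (ρ e).2 = e) {d : G.edgeSet → Bool} {e : G.edgeSet}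
    (he : d e = upward r ρ e) : r (arcOf ρ d e).1 < r (arcOf ρ d e).2 := by
  have hne : r (ρ e).1 ≠ r (ρ e).2 := hr.ne fun h => (G.not_isDiag_of_mem_edgeSet e.2)
    (by rw [← hρ e e.2, Sym2.mk_isDiag_iff]; exact h)
  unfold arcOf
  rw [he, upward]
  by_cases hlt : r (ρ e).2 < r (ρ e).1
  · simp [hlt]
  · simpa [hlt] using lt_of_le_of_ne (not_lt.1 hlt) hne

end Upward

theorem bridges_sstr_acyclic_general {V : Type*} (G : SimpleGraph V)
    (ρ : Sym2 V → V × V) (hρ : ∀ e ∈ G.edgeSet, Sym2.mk (ρ e).1 (ρ e).2 = e) :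
    (∀ X : Set G.edgeSet,
      (∀ e ∈ X, ∀ (v : V) (p : G.Walk v v), p.IsCycle → (e : Sym2 V) ∉ p.edges) →
      X ∈ sstr ({d : G.edgeSet → Bool | HasDiCycle (arcs G ρ d)}ᶜ)) ∧
    (∀ X : Set G.edgeSet,
      X ∈ str {d : G.edgeSet → Bool | HasDiCycle (arcs G ρ d)} →
      ∃ (v : V) (p : G.Walk v v), p.IsCycle ∧
        ∃ e : G.edgeSet, e ∉ X ∧ (e : Sym2 V) ∈ p.edges) := by
  have isBridge : ∀ e : G.edgeSet,
      (∀ (v : V) (p : G.Walk v v), p.IsCycle → (e : Sym2 V) ∉ p.edges) → G.IsBridge e :=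
    fun e he => (isBridge_iff_forall_cycle_notMem e.2).2 fun v => he v
  -- any injective rank works; `embeddingToCardinal` provides one on an arbitrary type
  have compl_notMem_str : ∀ Y : Set G.edgeSet, (∀ e ∈ Y, G.IsBridge e) →
      Yᶜ ∉ str {d : G.edgeSet → Bool | HasDiCycle (arcs G ρ d)} := by
    intro Y hY hstr
    obtain ⟨d, hcyc, hd⟩ := hstr (upward embeddingToCardinal ρ)
    exact not_hasDiCycle_arcs_of_isBridge hρ embeddingToCardinal hY
      (fun e he => lt_arcOf_of_eq_upward embeddingToCardinal.injective hρ (hd he)) hcyc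
  refine ⟨fun X hX => mem_sstr_compl_iff.2 <|
    compl_notMem_str X fun e he => isBridge e (hX e he), fun X hX => ?_⟩
  by_contra! h
  exact compl_notMem_str Xᶜ (fun e he => isBridge e fun v p hp hep => h v p hp e he hep)
    (by rwa [compl_compl])

/-- every `X ⊆ E` all of whose edges are bridges (edges lying on no cycle
of `G`) is strongly shattered by the system of acyclic orientations; equivalently, for
every `X` shattered by the system `𝕊_cyc` of cyclic orientations, `E − X` meets some
cycle of `G`. -/
theorem bridges_sstr_acyclic {V : Type*} [Fintype V] (G : SimpleGraph V)
    (ρ : Sym2 V → V × V) (hρ : ∀ e ∈ G.edgeSet, Sym2.mk (ρ e).1 (ρ e).2 = e) :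
    (∀ X : Set G.edgeSet,
      (∀ e ∈ X, ∀ (v : V) (p : G.Walk v v), p.IsCycle → (e : Sym2 V) ∉ p.edges) →
      X ∈ sstr ({d : G.edgeSet → Bool | HasDiCycle (arcs G ρ d)}ᶜ)) ∧
    (∀ X : Set G.edgeSet,
      X ∈ str {d : G.edgeSet → Bool | HasDiCycle (arcs G ρ d)} →
      ∃ (v : V) (p : G.Walk v v), p.IsCycle ∧
        ∃ e : G.edgeSet, e ∉ X ∧ (e : Sym2 V) ∈ p.edges) :=
  bridges_sstr_acyclic_general G ρ hρ
end

section
/- (General inequality) Let G be a finite simple undirected graph with edge set E. Let P be a predicate on digraphs on the vertex set V of G that is monotone increasing (if a digraph satisfies P then so does any digraph obtained from it by adding arcs), and let P' be a predicate on edge subsets of G such that whenever P'(X) holds for X ⊆ E there exists an orientation d_X of the edges of X for which the digraph (G_X)⃗^{d_X} satisfies P. Then the number of edge subsets X ⊆ E satisfying P' is at most the number of orientations d of G such that G⃗^d satisfies P. -/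
/-! Fix for each `X` with `P' X` an orientation `d_X` of `X` satisfying `P`. By monotonicity every
orientation of `G` agreeing with `d_X` on `X` satisfies `P`, so the good orientations contain, for
each such `X`, a subcube of `{0,1}^E` whose fixed coordinates are exactly `X`. A family `U` of
points containing subcubes with pairwise distinct fixed coordinate sets `X` has at least as many
points as there are subcubes: the complement of `U` misses the pattern `d_X` on `X`, so it shatters
none of these sets, while by Pajor's lemma it shatters at least as many sets as it has elements. -/

open Finset in
theorem Finset.card_le_card_of_forall_not_shatters_compl {α : Type*} [Fintype α] [DecidableEq α]
    {𝒯 𝒰 : Finset (Finset α)} (h : ∀ s ∈ 𝒯, ¬ 𝒰ᶜ.Shatters s) : #𝒯 ≤ #𝒰 := by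
  have h𝒯 : 𝒯 ⊆ 𝒰ᶜ.shattererᶜ := fun s hs => mem_compl.2 (mt mem_shatterer.1 (h s hs))
  calc #𝒯 ≤ #𝒰ᶜ.shattererᶜ := card_le_card h𝒯
    _ = Fintype.card (Finset α) - #𝒰ᶜ.shatterer := card_compl _
    _ ≤ Fintype.card (Finset α) - #𝒰ᶜ := Nat.sub_le_sub_left (card_le_card_shatterer _) _
    _ = #𝒰 := by rw [card_compl, Nat.sub_sub_self (card_le_univ 𝒰)]

theorem Set.ncard_le_ncard_of_forall_subcube_subset {α : Type*} [Finite α]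
    {T : Set (Set α)} {U : Set (α → Bool)}
    (h : ∀ X ∈ T, ∃ c : α → Bool, ∀ d, Set.EqOn d c X → d ∈ U) : T.ncard ≤ U.ncard := by
  classical
  have := Fintype.ofFinite α
  set support : (α → Bool) → Finset α := fun d => {a | d a = true}
  have support_injective : Function.Injective support := by
    intro d d' hdd'
    funext a
    exact Bool.eq_iff_iff.2 (by simpa [support] using Finset.ext_iff.1 hdd' a)
  rw [← Set.ncard_image_of_injective T fun _ _ => Set.toFinset_inj.1,
    ← Set.ncard_image_of_injective U support_injective,
    Set.ncard_eq_toFinset_card', Set.ncard_eq_toFinset_card']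
  refine Finset.card_le_card_of_forall_not_shatters_compl fun s hs hshatters => ?_
  obtain ⟨X, hX, rfl⟩ := by simpa using hs
  obtain ⟨c, hc⟩ := h X hX
  obtain ⟨u, hu, hXu⟩ := hshatters (Finset.inter_subset_left (s₂ := support c))
  refine Finset.mem_compl.1 hu (Set.mem_toFinset.2 ⟨fun a => decide (a ∈ u), hc _ fun a ha => ?_, ?_⟩)
  · exact Bool.eq_iff_iff.2 (by simpa [support, ha] using Finset.ext_iff.1 hXu a)
  · ext a; simp [support]

section arcsOn

variable {V : Type*} {G : SimpleGraph V} {ρ : Sym2 V → V × V}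

theorem arcsOn_mono {X Y : Set G.edgeSet} (hXY : X ⊆ Y) (d : G.edgeSet → Bool) {u v : V} :
    arcsOn G ρ X d u v → arcsOn G ρ Y d u v :=
  fun ⟨e, he, h⟩ => ⟨e, hXY he, h⟩

theorem arcsOn_congr {X : Set G.edgeSet} {d d' : G.edgeSet → Bool} (h : Set.EqOn d d' X) :
    arcsOn G ρ X d = arcsOn G ρ X d' := by
  ext u v
  refine exists_congr fun e => and_congr_right fun he => ?_
  rw [h he]

end arcsOn

theorem general_inequality_general {V : Type*} [Fintype V] (G : SimpleGraph V)
    (ρ : Sym2 V → V × V)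
    (P : (V → V → Prop) → Prop)
    (hmono : ∀ R R' : V → V → Prop, (∀ u v, R u v → R' u v) → P R → P R')
    (P' : Set G.edgeSet → Prop)
    (hP' : ∀ X : Set G.edgeSet, P' X → ∃ d : G.edgeSet → Bool, P (arcsOn G ρ X d)) :
    {X : Set G.edgeSet | P' X}.ncard ≤
      {d : G.edgeSet → Bool | P (arcs G ρ d)}.ncard := by
  refine Set.ncard_le_ncard_of_forall_subcube_subset fun X hX => ?_
  obtain ⟨c, hc⟩ := hP' X hX
  refine ⟨c, fun d hd => hmono _ _ (fun u v => arcsOn_mono (Set.subset_univ X) d) ?_⟩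
  rwa [arcsOn_congr hd]

/-- General inequality: if `P` is a monotone increasing digraph property
and `P'` is a property of edge subsets such that every `X` with `P' X` has an
orientation of its edges satisfying `P`, then the number of edge subsets satisfying `P'`
is at most the number of orientations of `G` satisfying `P`. -/
theorem general_inequality {V : Type*} [Fintype V] (G : SimpleGraph V)
    (ρ : Sym2 V → V × V) (hρ : ∀ e ∈ G.edgeSet, Sym2.mk (ρ e).1 (ρ e).2 = e)
    (P : (V → V → Prop) → Prop)
    (hmono : ∀ R R' : V → V → Prop, (∀ u v, R u v → R' u v) → P R → P R')
    (P' : Set G.edgeSet → Prop)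
    (hP' : ∀ X : Set G.edgeSet, P' X → ∃ d : G.edgeSet → Bool, P (arcsOn G ρ X d)) :
    {X : Set G.edgeSet | P' X}.ncard ≤
      {d : G.edgeSet → Bool | P (arcs G ρ d)}.ncard :=
  general_inequality_general G ρ P hmono P' hP'
end

section
/- Let G be a finite simple undirected graph with edge set E, let c : E → ℝ≥0 be a capacity function, let s, t be two vertices of G, and let w ∈ ℝ. Then the system 𝕊_w of all orientations d of G such that the digraph G⃗^d (with capacities c) admits an s-t flow of size at least w is shattering-extremal. -/
/-- The tail (source vertex) of the edge `e` oriented according to `d` (relative to the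
reference orientation `ρ`). -/
def etail {V : Type*} {G : SimpleGraph V} (ρ : Sym2 V → V × V)
    (d : G.edgeSet → Bool) (e : G.edgeSet) : V :=
  if d e = false then (ρ e.val).1 else (ρ e.val).2

/-- The head (target vertex) of the edge `e` oriented according to `d`. -/
def ehead {V : Type*} {G : SimpleGraph V} (ρ : Sym2 V → V × V)
    (d : G.edgeSet → Bool) (e : G.edgeSet) : V :=
  if d e = false then (ρ e.val).2 else (ρ e.val).1

open Classical in
/-- `φ` is an `s`-`t` flow of size `w` in the digraph obtained by orienting the edges of
`X ⊆ E(G)` according to `d`, with capacities `c`: it is supported on `X`, obeys the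
capacity constraints, is conserved at every vertex other than `s` and `t`, and its net
outflow at `s` is `w`. -/
def IsFlowOn {V : Type*} (G : SimpleGraph V) [Fintype G.edgeSet]
    (ρ : Sym2 V → V × V) (c : Sym2 V → NNReal) (s t : V)
    (X : Set G.edgeSet) (d : G.edgeSet → Bool) (φ : G.edgeSet → ℝ) (w : ℝ) : Prop :=
  (∀ e, e ∉ X → φ e = 0) ∧
  (∀ e, 0 ≤ φ e ∧ φ e ≤ (c e.val : ℝ)) ∧
  (∀ v : V, v ≠ s → v ≠ t →
    (∑ e : G.edgeSet, if e ∈ X ∧ ehead ρ d e = v then φ e else 0) =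
      (∑ e : G.edgeSet, if e ∈ X ∧ etail ρ d e = v then φ e else 0)) ∧
  ((∑ e : G.edgeSet, if e ∈ X ∧ etail ρ d e = s then φ e else 0) -
    (∑ e : G.edgeSet, if e ∈ X ∧ ehead ρ d e = s then φ e else 0) = w)

/-- The digraph obtained by orienting the edges of `X ⊆ E(G)` according to `d` admits an
`s`-`t` flow of size at least `w`. -/
def AdmitsFlow {V : Type*} (G : SimpleGraph V) [Fintype G.edgeSet]
    (ρ : Sym2 V → V × V) (c : Sym2 V → NNReal) (s t : V)
    (X : Set G.edgeSet) (d : G.edgeSet → Bool) (w : ℝ) : Prop :=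
  ∃ (φ : G.edgeSet → ℝ) (w' : ℝ), w ≤ w' ∧ IsFlowOn G ρ c s t X d φ w'

/-!
If `𝕊_w` shatters `Y`, then for every `s`-`t` cut `A` some member of `𝕊_w` orients all edges of `Y`
into `A`; hence every cut of `G - Y` has capacity at least `w`. By max-flow min-cut for the
undirected network `G - Y`, there is an undirected flow of value at least `w` that vanishes on `Y`.
Orienting the edges outside `Y` along this flow is then a single completion that puts every
orientation of `Y` into `𝕊_w`, so `Y` is strongly shattered.

Max-flow min-cut is obtained by compactness: a flow of maximum value admits no augmenting walk, so
the vertices reachable from `s` in its residual graph form a cut that it saturates.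
-/

section Shattering

variable {α : Type*} {S : Set (α → Bool)} {Y : Set α}

lemma StronglyShatters.shatters (h : StronglyShatters S Y) : Shatters S Y := by
  obtain ⟨g, hg⟩ := h
  intro f
  obtain ⟨h', hS, hf, -⟩ := hg f
  exact ⟨h', hS, hf⟩

lemma stronglyShatters_of_forall_eqOn_compl (g : α → Bool) (h : ∀ f, Set.EqOn f g Yᶜ → f ∈ S) :
    StronglyShatters S Y := by
  classical
  exact ⟨g, fun f => ⟨Y.piecewise f g, h _ (Y.piecewise_eqOn_compl f g),
    Y.piecewise_eqOn f g, Y.piecewise_eqOn_compl f g⟩⟩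

end Shattering

section SignedFlow

variable {V E : Type*} [DecidableEq V] (ends : E → V × V)

def incidence (e : E) : V → ℝ :=
  Pi.single (ends e).1 1 - Pi.single (ends e).2 1

def cutSign (A : Finset V) (e : E) : ℝ :=
  (if (ends e).1 ∈ A then 1 else 0) - (if (ends e).2 ∈ A then 1 else 0)

variable [Fintype E]

def netOutflow (x : E → ℝ) : V → ℝ :=
  ∑ e, x e • incidence ends e

def cutCapacity (cap : E → ℝ) (A : Finset V) : ℝ :=
  ∑ e, cap e * |cutSign ends A e|

def IsSignedFlow (cap : E → ℝ) (s t : V) (x : E → ℝ) : Prop :=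
  (∀ e, |x e| ≤ cap e) ∧ ∀ v, v ≠ s → v ≠ t → netOutflow ends x v = 0

variable {ends}

lemma netOutflow_add_single [DecidableEq E] (x : E → ℝ) (e : E) (δ : ℝ) :
    netOutflow ends (x + Pi.single e δ) = netOutflow ends x + δ • incidence ends e := by
  simp [netOutflow, add_smul, Finset.sum_add_distrib, Pi.single_apply]

lemma continuous_netOutflow_apply (v : V) : Continuous fun x : E → ℝ => netOutflow ends x v := by
  unfold netOutflow
  fun_prop

lemma netOutflow_eq_zero_of_forall_ne [Fintype V] {x : E → ℝ} {s : V}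
    (h : ∀ v, v ≠ s → netOutflow ends x v = 0) : netOutflow ends x s = 0 := by
  have hsum : ∑ v, netOutflow ends x v = 0 := by
    simp [netOutflow, incidence, Finset.sum_apply, Finset.sum_comm (γ := V), ← Finset.mul_sum]
  rwa [Finset.sum_eq_single s (fun v _ hv => h v hv) (by simp)] at hsum

lemma netOutflow_eq_sum_cutSign {x : E → ℝ} {s t : V}
    (hcons : ∀ v, v ≠ s → v ≠ t → netOutflow ends x v = 0) {A : Finset V}
    (hs : s ∈ A) (ht : t ∉ A) :
    netOutflow ends x s = ∑ e, x e * cutSign ends A e := by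
  calc netOutflow ends x s = ∑ v ∈ A, netOutflow ends x v :=
        (Finset.sum_eq_single_of_mem s hs fun v hv hvs =>
          hcons v hvs (ne_of_mem_of_not_mem hv ht)).symm
    _ = ∑ e, x e * cutSign ends A e := by
        simp [netOutflow, incidence, cutSign, Finset.sum_apply, Finset.sum_comm (γ := V),
          ← Finset.mul_sum, Finset.sum_sub_distrib]

end SignedFlow

section MaxFlowMinCut

variable {V E : Type*} [DecidableEq V]

def ResidualArc (ends : E → V × V) (cap x : E → ℝ) (u v : V) : Prop :=
  ∃ e, (ends e = (u, v) ∧ x e < cap e) ∨ (ends e = (v, u) ∧ -cap e < x e)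

variable {ends : E → V × V} {cap x : E → ℝ}

lemma ResidualArc.exists_signed_edge {u v : V} (h : ResidualArc ends cap x u v) :
    ∃ e, ∃ σ : ℝ, (σ = 1 ∨ σ = -1) ∧ σ * x e < cap e ∧
      σ • incidence ends e = Pi.single u 1 - Pi.single v 1 := by
  obtain ⟨e, ⟨he, hlt⟩ | ⟨he, hlt⟩⟩ := h
  · exact ⟨e, 1, Or.inl rfl, by simpa using hlt, by simp [incidence, he]⟩
  · exact ⟨e, -1, Or.inr rfl, by linarith, by simp [incidence, he]⟩

variable [Fintype E]

/-- The walk may revisit an edge, so the induction keeps the augmented flow `η`-close to `x`, with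
`η` shrunk at each step below the slack of the next arc. -/
lemma exists_augment_of_reflTransGen_residualArc [DecidableEq E] (hx : ∀ e, |x e| ≤ cap e)
    {s v : V} (h : Relation.ReflTransGen (ResidualArc ends cap x) s v) {η : ℝ} (hη : 0 < η) :
    ∃ x' : E → ℝ, ∃ ε : ℝ, 0 < ε ∧ ε ≤ η ∧ (∀ e, |x' e| ≤ cap e) ∧ (∀ e, |x' e - x e| ≤ η) ∧
      netOutflow ends x' = netOutflow ends x + ε • (Pi.single s 1 - Pi.single v 1) := by
  induction h generalizing η with
  | refl => exact ⟨x, η, hη, le_rfl, hx, by simp [hη.le], by simp⟩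
  | @tail a b _ hab ih =>
    obtain ⟨e, σ, hσ, hslack, hinc⟩ := hab.exists_signed_edge
    obtain ⟨x₁, ε, hε, hεη, hcap₁, hclose₁, hnet₁⟩ :=
      ih (η := min (η / 2) ((cap e - σ * x e) / 2)) (by apply lt_min <;> linarith)
    have hεη' : ε ≤ η / 2 := hεη.trans (min_le_left _ _)
    have hεslack : ε ≤ (cap e - σ * x e) / 2 := hεη.trans (min_le_right _ _)
    refine ⟨x₁ + Pi.single e (σ * ε), ε, hε, by linarith, fun e' => ?_, fun e' => ?_, ?_⟩
    · obtain rfl | he' := eq_or_ne e' e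
      · have hcl := abs_le.mp ((hclose₁ e').trans (min_le_right _ _))
        have hc := abs_le.mp (hcap₁ e')
        rw [Pi.add_apply, Pi.single_eq_same, abs_le]
        rcases hσ with rfl | rfl <;> constructor <;> linarith
      · simpa [Pi.single_eq_of_ne he'] using hcap₁ e'
    · obtain rfl | he' := eq_or_ne e' e
      · have hcl := abs_le.mp ((hclose₁ e').trans (min_le_left _ _))
        rw [Pi.add_apply, Pi.single_eq_same, abs_le]
        rcases hσ with rfl | rfl <;> constructor <;> linarith
      · simpa [Pi.single_eq_of_ne he'] using
          (hclose₁ e').trans ((min_le_left _ _).trans (by linarith))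
    · rw [netOutflow_add_single, hnet₁, mul_comm, ← smul_smul, hinc]
      module

lemma isCompact_setOf_isSignedFlow (s t : V) :
    IsCompact {x : E → ℝ | IsSignedFlow ends cap s t x} := by
  have hclosed : IsClosed {x : E → ℝ | IsSignedFlow ends cap s t x} := by
    simp only [IsSignedFlow, Set.ofPred_and, Set.ofPred_forall]
    refine (isClosed_iInter fun e => isClosed_le (by fun_prop) (by fun_prop)).inter
      (isClosed_iInter fun v => isClosed_iInter fun _ => isClosed_iInter fun _ =>
        isClosed_eq (continuous_netOutflow_apply v) continuous_const)
  exact (isCompact_univ_pi fun e => isCompact_Icc (a := -cap e) (b := cap e)).of_isClosed_subset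
    hclosed fun x hx e _ => abs_le.mp (hx.1 e)

lemma IsSignedFlow.not_reflTransGen_residualArc {s t : V} (hst : s ≠ t)
    (hmax : IsMaxOn (fun y => netOutflow ends y s) {y | IsSignedFlow ends cap s t y} x)
    (hx : IsSignedFlow ends cap s t x) :
    ¬ Relation.ReflTransGen (ResidualArc ends cap x) s t := by
  classical
  intro h
  obtain ⟨x', ε, hε, -, hcap', -, hnet'⟩ :=
    exists_augment_of_reflTransGen_residualArc hx.1 h one_pos
  have hx' : IsSignedFlow ends cap s t x' :=
    ⟨hcap', fun v hvs hvt => by simp [hnet', hx.2 v hvs hvt, hvs, hvt]⟩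
  have := hmax hx'
  simp [hnet', hst.symm] at this
  linarith

lemma IsSignedFlow.netOutflow_eq_cutCapacity {s t : V} (hx : IsSignedFlow ends cap s t x)
    {A : Finset V} (hs : s ∈ A) (ht : t ∉ A)
    (hA : ∀ u v, u ∈ A → ResidualArc ends cap x u v → v ∈ A) :
    netOutflow ends x s = cutCapacity ends cap A := by
  rw [netOutflow_eq_sum_cutSign hx.2 hs ht, cutCapacity]
  refine Finset.sum_congr rfl fun e _ => ?_
  have hxe := abs_le.mp (hx.1 e)
  by_cases h₁ : (ends e).1 ∈ A <;> by_cases h₂ : (ends e).2 ∈ A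
  · simp [cutSign, h₁, h₂]
  · have : x e = cap e := by
      by_contra hne
      exact h₂ (hA _ _ h₁ ⟨e, Or.inl ⟨Prod.mk.eta.symm, lt_of_le_of_ne hxe.2 hne⟩⟩)
    simp [cutSign, h₁, h₂, this]
  · have : x e = -cap e := by
      by_contra hne
      exact h₁ (hA _ _ h₂ ⟨e, Or.inr ⟨Prod.mk.eta.symm, lt_of_le_of_ne hxe.1 (Ne.symm hne)⟩⟩)
    simp [cutSign, h₁, h₂, this]
  · simp [cutSign, h₁, h₂]

theorem exists_isSignedFlow_le_netOutflow [Fintype V] (hcap : ∀ e, 0 ≤ cap e) {s t : V}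
    (hst : s ≠ t) {w : ℝ} (hcut : ∀ A : Finset V, s ∈ A → t ∉ A → w ≤ cutCapacity ends cap A) :
    ∃ x, IsSignedFlow ends cap s t x ∧ w ≤ netOutflow ends x s := by
  classical
  have hzero : IsSignedFlow ends cap s t 0 := ⟨by simpa using hcap, by simp [netOutflow]⟩
  obtain ⟨x, hx, hmax⟩ := (isCompact_setOf_isSignedFlow s t).exists_isMaxOn ⟨0, hzero⟩
    (continuous_netOutflow_apply s).continuousOn
  let A := Finset.univ.filter (Relation.ReflTransGen (ResidualArc ends cap x) s)
  have hA : ∀ u v, u ∈ A → ResidualArc ends cap x u v → v ∈ A := fun u v hu huv => by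
    simpa [A] using (Finset.mem_filter.mp hu).2.tail huv
  have hs : s ∈ A := by simp [A, Relation.ReflTransGen.refl]
  have ht : t ∉ A := by simpa [A] using hx.not_reflTransGen_residualArc hst hmax
  exact ⟨x, hx, (hcut A hs ht).trans_eq (hx.netOutflow_eq_cutCapacity hs ht hA).symm⟩

end MaxFlowMinCut

section Orientation

variable {E : Type*}

def signedFlowOf (d : E → Bool) (φ : E → ℝ) (e : E) : ℝ :=
  if d e then -φ e else φ e

lemma abs_signedFlowOf (d : E → Bool) (φ : E → ℝ) (e : E) : |signedFlowOf d φ e| = |φ e| := by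
  unfold signedFlowOf
  split_ifs <;> simp

lemma signedFlowOf_abs {d : E → Bool} {x : E → ℝ} (hd : ∀ e, x e ≠ 0 → d e = decide (x e < 0)) :
    signedFlowOf d (fun e => |x e|) = x := by
  funext e
  rcases lt_trichotomy (x e) 0 with h | h | h
  · simp [signedFlowOf, hd e h.ne, h, abs_of_neg]
  · simp [signedFlowOf, h]
  · simp [signedFlowOf, hd e h.ne', h.not_gt, abs_of_pos h]

end Orientation

section GraphFlow

open Classical

variable {V : Type*} {G : SimpleGraph V} [Fintype G.edgeSet] {ρ : Sym2 V → V × V}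
  {c : Sym2 V → NNReal} {s t : V} {d : G.edgeSet → Bool} {w : ℝ}

lemma netOutflow_signedFlowOf (φ : G.edgeSet → ℝ) (v : V) :
    netOutflow (fun e : G.edgeSet => ρ e.val) (signedFlowOf d φ) v =
      (∑ e, if etail ρ d e = v then φ e else 0) - ∑ e, if ehead ρ d e = v then φ e else 0 := by
  simp only [netOutflow, Finset.sum_apply, ← Finset.sum_sub_distrib]
  refine Finset.sum_congr rfl fun e _ => ?_
  cases h : d e <;> simp [signedFlowOf, incidence, etail, ehead, h, Pi.single_apply, eq_comm] <;>
    split_ifs <;> ring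

lemma isFlowOn_univ_iff (φ : G.edgeSet → ℝ) :
    IsFlowOn G ρ c s t Set.univ d φ w ↔ (∀ e, 0 ≤ φ e ∧ φ e ≤ c e.val) ∧
      (∀ v, v ≠ s → v ≠ t → netOutflow (fun e : G.edgeSet => ρ e.val) (signedFlowOf d φ) v = 0) ∧
      netOutflow (fun e : G.edgeSet => ρ e.val) (signedFlowOf d φ) s = w := by
  simp only [IsFlowOn, Set.mem_univ, not_true_eq_false, true_and, IsEmpty.forall_iff,
    implies_true, netOutflow_signedFlowOf, sub_eq_zero]
  exact and_congr_right' (and_congr_left' (forall₃_congr fun _ _ _ => eq_comm))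

lemma admitsFlow_of_nonpos (hw : w ≤ 0) (d : G.edgeSet → Bool) :
    AdmitsFlow G ρ c s t Set.univ d w :=
  ⟨0, 0, hw, (isFlowOn_univ_iff 0).2 ⟨fun _ => by simp, by simp [signedFlowOf, netOutflow]⟩⟩

lemma AdmitsFlow.nonpos_of_source_eq_sink [Fintype V] (h : AdmitsFlow G ρ c s s Set.univ d w) :
    w ≤ 0 := by
  obtain ⟨φ, w', hww', hφ⟩ := h
  obtain ⟨-, hcons, rfl⟩ := (isFlowOn_univ_iff φ).1 hφ
  exact hww'.trans (netOutflow_eq_zero_of_forall_ne fun v hv => hcons v hv hv).le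

/-- `d e = decide ((ρ e).1 ∈ A)` orients `e` so that it does not leave `A`. -/
lemma AdmitsFlow.le_cutCapacity (h : AdmitsFlow G ρ c s t Set.univ d w) {A : Finset V}
    (hs : s ∈ A) (ht : t ∉ A) {Y : Set G.edgeSet}
    (hY : ∀ e ∈ Y, d e = decide ((ρ e.val).1 ∈ A)) :
    w ≤ cutCapacity (fun e : G.edgeSet => ρ e.val) (Yᶜ.indicator fun e => (c e.val : ℝ)) A := by
  obtain ⟨φ, w', hww', hφ⟩ := h
  obtain ⟨hcap, hcons, rfl⟩ := (isFlowOn_univ_iff φ).1 hφ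
  refine hww'.trans ((netOutflow_eq_sum_cutSign hcons hs ht).trans_le
    (Finset.sum_le_sum fun e _ => ?_))
  by_cases he : e ∈ Y
  · rw [Set.indicator_of_notMem (Set.notMem_compl_iff.2 he), zero_mul]
    have := (hcap e).1
    by_cases h₁ : (ρ e.val).1 ∈ A <;> by_cases h₂ : (ρ e.val).2 ∈ A <;>
      simp [signedFlowOf, cutSign, hY e he, h₁, h₂, this]
  · rw [Set.indicator_of_mem he]
    calc signedFlowOf d φ e * cutSign _ A e ≤ |signedFlowOf d φ e| * |cutSign _ A e| := by
          rw [← abs_mul]; exact le_abs_self _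
      _ ≤ c e.val * |cutSign _ A e| := by
          rw [abs_signedFlowOf, abs_of_nonneg (hcap e).1]
          exact mul_le_mul_of_nonneg_right (hcap e).2 (abs_nonneg _)

lemma IsSignedFlow.mono {E : Type*} [Fintype E] {ends : E → V × V} {cap cap' x : E → ℝ}
    (hx : IsSignedFlow ends cap s t x) (hcap : ∀ e, cap e ≤ cap' e) :
    IsSignedFlow ends cap' s t x :=
  ⟨fun e => (hx.1 e).trans (hcap e), hx.2⟩

lemma admitsFlow_of_isSignedFlow {x : G.edgeSet → ℝ}
    (hx : IsSignedFlow (fun e : G.edgeSet => ρ e.val) (fun e => c e.val) s t x)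
    (hw : w ≤ netOutflow (fun e : G.edgeSet => ρ e.val) x s)
    (hd : signedFlowOf d (fun e => |x e|) = x) : AdmitsFlow G ρ c s t Set.univ d w :=
  ⟨_, _, hw, (isFlowOn_univ_iff _).2 <| by
    rw [hd]
    exact ⟨fun e => ⟨abs_nonneg _, hx.1 e⟩, hx.2, rfl⟩⟩

end GraphFlow

theorem flow_system_SE_general {V : Type*} [Fintype V] (G : SimpleGraph V) [Fintype G.edgeSet]
    (ρ : Sym2 V → V × V)
    (c : Sym2 V → NNReal) (s t : V) (w : ℝ) :
    str {d : G.edgeSet → Bool | AdmitsFlow G ρ c s t Set.univ d w} =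
      sstr {d : G.edgeSet → Bool | AdmitsFlow G ρ c s t Set.univ d w} := by
  classical
  ext Y
  change Shatters _ Y ↔ StronglyShatters _ Y
  refine ⟨fun hY => ?_, StronglyShatters.shatters⟩
  by_cases hw : w ≤ 0
  · exact stronglyShatters_of_forall_eqOn_compl (fun _ => false) fun d _ =>
      admitsFlow_of_nonpos hw d
  obtain ⟨d₀, hd₀, -⟩ := hY fun _ => false
  have hst : s ≠ t := by
    rintro rfl
    exact hw (AdmitsFlow.nonpos_of_source_eq_sink hd₀)
  have hcut : ∀ A : Finset V, s ∈ A → t ∉ A → w ≤ cutCapacity (fun e : G.edgeSet => ρ e.val)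
      (Yᶜ.indicator fun e => (c e.val : ℝ)) A := by
    intro A hs ht
    obtain ⟨d, hd, hdY⟩ := hY fun e => decide ((ρ e.val).1 ∈ A)
    exact hd.le_cutCapacity hs ht fun e he => hdY he
  obtain ⟨x, hx, hxw⟩ := exists_isSignedFlow_le_netOutflow
    (fun e => Set.indicator_nonneg (fun e _ => (c e.val).2) e) hst hcut
  refine stronglyShatters_of_forall_eqOn_compl (fun e => decide (x e < 0)) fun d hd =>
    admitsFlow_of_isSignedFlow (hx.mono fun e => Set.indicator_le_self' (fun e _ => (c e.val).2) e)
      hxw (signedFlowOf_abs fun e hxe => hd fun heY => hxe ?_)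
  simpa [Set.indicator_of_notMem (Set.notMem_compl_iff.2 heY)] using hx.1 e

/-- the system `𝕊_w` of orientations of `G` admitting an `s`-`t` flow of
size at least `w` is shattering-extremal. -/
theorem flow_system_SE {V : Type*} [Fintype V] (G : SimpleGraph V) [Fintype G.edgeSet]
    (ρ : Sym2 V → V × V) (hρ : ∀ e ∈ G.edgeSet, Function.uncurry Sym2.mk (ρ e) = e)
    (c : Sym2 V → NNReal) (s t : V) (w : ℝ) :
    str {d : G.edgeSet → Bool | AdmitsFlow G ρ c s t Set.univ d w} =
      sstr {d : G.edgeSet → Bool | AdmitsFlow G ρ c s t Set.univ d w} :=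
  flow_system_SE_general G ρ c s t w
end
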